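/- arXiv:2509.16135 — 6 statements merged into one kernel-verified Lean document; each statement's English description precedes it below -/
import Mathlib

section
/- In a bipartite graph G with a perfect matching M, an edge e lies in every perfect matching or in no perfect matching of G if and only if there is no M-alternating cycle in G containing e. -/
/-- A closed walk `c` is an `M`-alternating cycle: it is a cycle and its edges,
read cyclically, alternate between edges of `M` and edges not in `M`. -/
def IsAltCycle {V : Type*} (G : SimpleGraph V) (M : G.Subgraph) {v : V}
    (c : G.Walk v v) : Prop :=
  c.IsCycle ∧ ∀ i : Fin c.edges.length,
    (c.edges.get i ∈ M.edgeSet ↔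
      c.edges.get ⟨(i + 1) % c.edges.length, Nat.mod_lt _ i.pos⟩ ∉ M.edgeSet)

open SimpleGraph
open scoped symmDiff

namespace AltCycleAux

variable {V : Type*} {G : SimpleGraph V} {u v : V} {M : G.Subgraph}

lemma support_get (p : G.Walk u v) (i : ℕ) (h : i < p.support.length) :
    p.support.get ⟨i, h⟩ = p.getVert i := by
  induction p generalizing i with
  | nil => simp at h; simp [h]
  | cons ha p ih =>
    cases i with
    | zero => simp
    | succ n =>
      simp only [Walk.support_cons, List.get_cons_succ, Walk.getVert_cons_succ]
      exact ih _ _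

lemma edges_get (p : G.Walk u v) (i : ℕ) (h : i < p.edges.length) :
    p.edges.get ⟨i, h⟩ = s(p.getVert i, p.getVert (i+1)) := by
  induction p generalizing i with
  | nil => simp at h
  | cons ha p ih =>
    cases i with
    | zero => simp
    | succ n =>
      simp only [Walk.edges_cons, List.get_cons_succ, Walk.getVert_cons_succ]
      exact ih _ _

lemma cycle_getVert_inj {c : G.Walk v v} (hc : c.IsCycle) {i j : ℕ}
    (hi : i < c.length) (hj : j < c.length) (hij : c.getVert i = c.getVert j) : i = j := by
  have hnd : c.support.tail.Nodup := hc.2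
  have hlen : c.support.length = c.length + 1 := Walk.length_support c
  have hlt : c.support.tail.length = c.length := by simp [List.length_tail, hlen]
  have htget : ∀ (k : ℕ) (hk : k < c.support.tail.length),
      c.support.tail.get ⟨k, hk⟩ = c.getVert (k+1) := by
    intro k hk
    rw [List.get_tail c.support k hk (by omega), support_get]
  have hne3 : 3 ≤ c.length := hc.three_le_length
  have hgetlast : c.support.tail.get ⟨c.length - 1, by omega⟩ = v := by
    rw [htget]
    have : c.length - 1 + 1 = c.length := by omega
    rw [this, Walk.getVert_length]
  have key : ∀ k, 0 < k → k < c.length → c.getVert k ≠ v := by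
    intro k hk0 hk hkv
    have h1 : c.support.tail.get ⟨k - 1, by omega⟩ = v := by
      rw [htget]
      have : k - 1 + 1 = k := by omega
      rw [this]; exact hkv
    have := (List.Nodup.get_inj_iff hnd).mp (h1.trans hgetlast.symm)
    simp only [Fin.mk.injEq] at this
    omega
  rcases Nat.eq_zero_or_pos i with hi0 | hi0
  · rcases Nat.eq_zero_or_pos j with hj0 | hj0
    · omega
    · exfalso; exact key j hj0 hj (by rw [← hij, hi0, Walk.getVert_zero])
  · rcases Nat.eq_zero_or_pos j with hj0 | hj0
    · exfalso; exact key i hi0 hi (by rw [hij, hj0, Walk.getVert_zero])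
    · have h1 : c.support.tail.get ⟨i - 1, by omega⟩ = c.support.tail.get ⟨j - 1, by omega⟩ := by
        rw [htget, htget]
        have e1 : i - 1 + 1 = i := by omega
        have e2 : j - 1 + 1 = j := by omega
        rw [e1, e2]; exact hij
      have := (List.Nodup.get_inj_iff hnd).mp h1
      simp only [Fin.mk.injEq] at this
      omega

lemma getVert_succ_mod {c : G.Walk v v} {j : ℕ} (hj : j < c.length) :
    c.getVert ((j+1) % c.length) = c.getVert (j+1) := by
  rcases Nat.lt_or_ge (j+1) c.length with h | h
  · rw [Nat.mod_eq_of_lt h]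
  · have : j + 1 = c.length := by omega
    rw [this, Nat.mod_self, Walk.getVert_zero, Walk.getVert_length]

lemma getVert_pred_succ {c : G.Walk v v} (hc : c.IsCycle) {j : ℕ} (hj : j < c.length) :
    c.getVert ((j + (c.length - 1)) % c.length + 1) = c.getVert j := by
  have h3 := hc.three_le_length
  rcases Nat.eq_zero_or_pos j with rfl | hj0
  · have : (0 + (c.length - 1)) % c.length = c.length - 1 := by
      rw [Nat.zero_add, Nat.mod_eq_of_lt (by omega)]
    rw [this]
    have : c.length - 1 + 1 = c.length := by omega
    rw [this, Walk.getVert_length, Walk.getVert_zero]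
  · have : (j + (c.length - 1)) % c.length = j - 1 := by
      have : j + (c.length - 1) = (j - 1) + c.length := by omega
      rw [this, Nat.add_mod_right, Nat.mod_eq_of_lt (by omega)]
    rw [this]
    congr 1
    omega

lemma pred_lt_length {c : G.Walk v v} (hc : c.IsCycle) {j : ℕ} (_hj : j < c.length) :
    (j + (c.length - 1)) % c.length < c.length :=
  Nat.mod_lt _ (by have := hc.three_le_length; omega)

/-- adjacency in the subgraph of a cycle -/
lemma cycle_adj_iff {c : G.Walk v v} (hc : c.IsCycle) {j : ℕ} (hj : j < c.length) (x : V) :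
    c.toSubgraph.Adj (c.getVert j) x ↔
      x = c.getVert ((j + (c.length - 1)) % c.length) ∨ x = c.getVert ((j+1) % c.length) := by
  have h3 := hc.three_le_length
  constructor
  · intro hadj
    rw [Walk.toSubgraph_adj_iff] at hadj
    obtain ⟨i, hi, hilt⟩ := hadj
    rw [Sym2.eq_iff] at hi
    rcases hi with ⟨h1, h2⟩ | ⟨h1, h2⟩
    · have : i = j := cycle_getVert_inj hc hilt hj h1
      subst this
      right
      rw [getVert_succ_mod hj, h2]
    · left
      rcases Nat.lt_or_ge (i+1) c.length with h | h
      · have hij : i + 1 = j := cycle_getVert_inj hc h hj h2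
        have : (j + (c.length - 1)) % c.length = i := by
          have : j + (c.length - 1) = i + c.length := by omega
          rw [this, Nat.add_mod_right, Nat.mod_eq_of_lt hilt]
        rw [this, h1]
      · have hi1 : i + 1 = c.length := by omega
        have hj0 : j = 0 := by
          apply cycle_getVert_inj hc hj (show 0 < c.length by omega)
          rw [← h2, hi1, Walk.getVert_length, Walk.getVert_zero]
        have : (j + (c.length - 1)) % c.length = i := by
          rw [hj0, Nat.zero_add, Nat.mod_eq_of_lt (by omega)]
          omega
        rw [this, h1]
  · intro hx
    rcases hx with rfl | rfl
    · have := Walk.toSubgraph_adj_getVert c (pred_lt_length hc hj)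
      rw [getVert_pred_succ hc hj] at this
      exact this.symm
    · rw [getVert_succ_mod hj]
      exact Walk.toSubgraph_adj_getVert c hj

lemma exists_getVert_of_adj {c : G.Walk v v} (hc : c.IsCycle) {a x : V}
    (h : c.toSubgraph.Adj a x) : ∃ j < c.length, c.getVert j = a := by
  have h3 := hc.three_le_length
  rw [Walk.toSubgraph_adj_iff] at h
  obtain ⟨i, hi, hilt⟩ := h
  rw [Sym2.eq_iff] at hi
  rcases hi with ⟨h1, _⟩ | ⟨_, h2⟩
  · exact ⟨i, hilt, h1⟩
  · rcases Nat.lt_or_ge (i+1) c.length with h | h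
    · exact ⟨i+1, h, h2⟩
    · refine ⟨0, by omega, ?_⟩
      rw [← h2, Walk.getVert_zero]
      have : i + 1 = c.length := by omega
      rw [this, Walk.getVert_length]

lemma cycle_neighborSet {c : G.Walk v v} (hc : c.IsCycle) {j : ℕ} (hj : j < c.length) :
    c.toSubgraph.spanningCoe.neighborSet (c.getVert j) =
      {c.getVert ((j + (c.length - 1)) % c.length), c.getVert ((j+1) % c.length)} := by
  ext x
  simp only [mem_neighborSet, Subgraph.spanningCoe_adj, Set.mem_insert_iff, Set.mem_singleton_iff]
  exact cycle_adj_iff hc hj x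

lemma cycle_pred_ne_succ {c : G.Walk v v} (hc : c.IsCycle) {j : ℕ} (hj : j < c.length) :
    c.getVert ((j + (c.length - 1)) % c.length) ≠ c.getVert ((j+1) % c.length) := by
  have h3 := hc.three_le_length
  intro h
  have := cycle_getVert_inj hc (pred_lt_length hc hj) (Nat.mod_lt _ (by omega)) h
  have h2 : (j + (c.length - 1)) % c.length = (j + 1) % c.length := this
  rcases Nat.eq_zero_or_pos j with rfl | hj0
  · rw [Nat.zero_add, Nat.mod_eq_of_lt (by omega), Nat.mod_eq_of_lt (by omega)] at h2
    omega
  · have e1 : (j + (c.length - 1)) % c.length = j - 1 := by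
      have : j + (c.length - 1) = (j - 1) + c.length := by omega
      rw [this, Nat.add_mod_right, Nat.mod_eq_of_lt (by omega)]
    rcases Nat.lt_or_ge (j+1) c.length with h' | h'
    · rw [e1, Nat.mod_eq_of_lt h'] at h2; omega
    · have : j + 1 = c.length := by omega
      rw [e1, this, Nat.mod_self] at h2; omega

lemma cycle_isCycles {c : G.Walk v v} (hc : c.IsCycle) :
    c.toSubgraph.spanningCoe.IsCycles := by
  intro a ⟨x, hx⟩
  simp only [mem_neighborSet, Subgraph.spanningCoe_adj] at hx
  obtain ⟨j, hj, rfl⟩ := exists_getVert_of_adj hc hx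
  rw [cycle_neighborSet hc hj]
  exact Set.ncard_pair (cycle_pred_ne_succ hc hj)

lemma succ_pred_mod {n j : ℕ} (h3 : 3 ≤ n) (hj : j < n) :
    ((j + (n - 1)) % n + 1) % n = j := by
  rcases Nat.eq_zero_or_pos j with rfl | hj0
  · rw [Nat.zero_add, Nat.mod_eq_of_lt (show n - 1 < n by omega)]
    have : n - 1 + 1 = n := by omega
    rw [this, Nat.mod_self]
  · have e1 : (j + (n - 1)) % n = j - 1 := by
      have : j + (n - 1) = (j - 1) + n := by omega
      rw [this, Nat.add_mod_right, Nat.mod_eq_of_lt (by omega)]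
    rw [e1]
    have : j - 1 + 1 = j := by omega
    rw [this, Nat.mod_eq_of_lt hj]

/-- the key translation of the `IsAltCycle` alternation condition -/
lemma halt_pred {c : G.Walk v v} (hc : c.IsCycle)
    (halt : ∀ i : Fin c.edges.length,
      (c.edges.get i ∈ M.edgeSet ↔
        c.edges.get ⟨(i + 1) % c.edges.length, Nat.mod_lt _ i.pos⟩ ∉ M.edgeSet))
    {j : ℕ} (hj : j < c.length) :
    (s(c.getVert ((j + (c.length - 1)) % c.length), c.getVert j) ∈ M.edgeSet ↔
      s(c.getVert j, c.getVert ((j+1) % c.length)) ∉ M.edgeSet) := by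
  have h3 := hc.three_le_length
  have hel : c.edges.length = c.length := Walk.length_edges c
  set n := c.length with hn
  have hm : (j + (n - 1)) % n < c.edges.length := by rw [hel]; exact pred_lt_length hc hj
  have := halt ⟨(j + (n - 1)) % n, hm⟩
  rw [edges_get, edges_get] at this
  simp only at this
  rw [getVert_pred_succ hc hj] at this
  have hmod : ((j + (n - 1)) % n + 1) % c.edges.length = j := by
    rw [hel]; exact succ_pred_mod h3 hj
  rw [hmod] at this
  rw [getVert_succ_mod hj]
  exact this

lemma cycle_isAlternating {c : G.Walk v v} (hc : c.IsCycle)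
    (halt : ∀ i : Fin c.edges.length,
      (c.edges.get i ∈ M.edgeSet ↔
        c.edges.get ⟨(i + 1) % c.edges.length, Nat.mod_lt _ i.pos⟩ ∉ M.edgeSet)) :
    c.toSubgraph.spanningCoe.IsAlternating M.spanningCoe := by
  intro a w w' hne haw haw'
  simp only [Subgraph.spanningCoe_adj] at haw haw'
  obtain ⟨j, hj, rfl⟩ := exists_getVert_of_adj hc haw
  rw [cycle_adj_iff hc hj] at haw haw'
  have key := halt_pred hc halt hj
  have h1 : ∀ x : V, M.spanningCoe.Adj (c.getVert j) x ↔ s(c.getVert j, x) ∈ M.edgeSet := by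
    intro x; simp [Subgraph.mem_edgeSet]
  have key' : (M.spanningCoe.Adj (c.getVert j) (c.getVert ((j + (c.length - 1)) % c.length)) ↔
      ¬ M.spanningCoe.Adj (c.getVert j) (c.getVert ((j+1) % c.length))) := by
    rw [h1, h1, ← key, Sym2.eq_swap]
  rcases haw with rfl | rfl <;> rcases haw' with rfl | rfl
  · exact absurd rfl hne
  · exact key'
  · tauto
  · exact absurd rfl hne

lemma symmdiff_pm {M : G.Subgraph} {H : SimpleGraph V} (hM : M.IsPerfectMatching)
    (halt : H.IsAlternating M.spanningCoe) (hcyc : H.IsCycles) (hHG : H ≤ G) :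
    ∃ N : G.Subgraph, N.IsPerfectMatching ∧
      ∀ a b : V, (s(a,b) ∈ N.edgeSet ↔ (M.spanningCoe ∆ H).Adj a b) := by
  have hle : M.spanningCoe ∆ H ≤ G :=
    symmDiff_le (le_trans M.spanningCoe_le le_sup_right) (le_trans hHG le_sup_right)
  have hpm : (SimpleGraph.toSubgraph (M.spanningCoe ∆ H) le_rfl).IsPerfectMatching :=
    Subgraph.IsPerfectMatching.symmDiff_of_isAlternating hM halt hcyc
  refine ⟨(SimpleGraph.toSubgraph (M.spanningCoe ∆ H) le_rfl).map (Hom.ofLE hle),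
    ⟨hpm.1.map_ofLE hle, ?_⟩, ?_⟩
  · intro a
    simp only [Subgraph.map_verts, Hom.coe_ofLE, id_eq, Set.image_id']
    exact hpm.2 a
  · intro a b
    rw [Subgraph.mem_edgeSet]
    constructor
    · rintro ⟨a', b', hadj, rfl, rfl⟩
      exact hadj
    · intro hadj
      exact ⟨a, b, hadj, rfl, rfl⟩

lemma reach_of_isCycles [Fintype V] {H : SimpleGraph V} (hcyc : H.IsCycles) {a b : V}
    (hab : H.Adj a b) : (H \ fromEdgeSet {s(a,b)}).Reachable a b := by
  classical
  by_contra hnr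
  set H' := H \ fromEdgeSet {s(a,b)} with hH'
  have hab' : a ≠ b := hab.ne
  have hH'adj : ∀ x y, H'.Adj x y ↔ H.Adj x y ∧ s(x,y) ≠ s(a,b) := by
    intro x y
    rw [hH']
    simp only [sdiff_adj, fromEdgeSet_adj, Set.mem_singleton_iff, not_and, ne_eq]
    constructor
    · rintro ⟨h1, h2⟩
      exact ⟨h1, fun hee => (h2 hee h1.ne)⟩
    · rintro ⟨h1, h2⟩
      exact ⟨h1, fun hee _ => h2 hee⟩
  set S : Set V := {x | H'.Reachable b x} with hS
  have hbS : b ∈ S := Reachable.refl b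
  have haS : a ∉ S := fun h => hnr h.symm
  have hclosed : ∀ x y, x ∈ S → H'.Adj x y → y ∈ S := by
    intro x y hx hxy
    exact hx.trans hxy.reachable
  set K : SimpleGraph V :=
    { Adj := fun x y => H'.Adj x y ∧ x ∈ S ∧ y ∈ S
      symm := ⟨by rintro x y ⟨h1, h2, h3⟩; exact ⟨h1.symm, h3, h2⟩⟩
      loopless := ⟨by rintro x ⟨h1, _⟩; exact h1.ne rfl⟩ } with hK
  letI : DecidableRel K.Adj := Classical.decRel _
  have hKnb : ∀ x, x ∈ S → K.neighborSet x = H'.neighborSet x := by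
    intro x hx
    ext y
    simp only [mem_neighborSet, hK]
    exact ⟨fun h => h.1, fun h => ⟨h, hx, hclosed x y hx h⟩⟩
  have hKnb' : ∀ x, x ∉ S → K.neighborSet x = ∅ := by
    intro x hx
    ext y
    simp only [mem_neighborSet, hK, Set.mem_empty_iff_false, iff_false]
    rintro ⟨_, h2, _⟩
    exact hx h2
  have hdeg : ∀ x, K.degree x = (K.neighborSet x).ncard := by
    intro x
    rw [← card_neighborSet_eq_degree, ← Set.toFinset_card, Set.ncard_eq_toFinset_card']
  have hnb_b : H'.neighborSet b = H.neighborSet b \ {a} := by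
    ext y
    simp only [mem_neighborSet, hH'adj, Set.mem_diff, Set.mem_singleton_iff]
    constructor
    · rintro ⟨h1, h2⟩
      refine ⟨h1, fun hya => h2 ?_⟩
      subst hya
      rw [Sym2.eq_swap]
    · rintro ⟨h1, h2⟩
      refine ⟨h1, fun hee => ?_⟩
      rw [Sym2.eq_iff] at hee
      rcases hee with ⟨h3, h4⟩ | ⟨h3, h4⟩
      · exact hab' h3.symm
      · exact h2 h4
  have hdegb : K.degree b = 1 := by
    rw [hdeg, hKnb b hbS, hnb_b]
    have hd := Set.ncard_diff_singleton_of_mem (show a ∈ H.neighborSet b from hab.symm)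
    rw [hd, hcyc ⟨a, hab.symm⟩]
  have hdegeven : ∀ x, x ≠ b → Even (K.degree x) := by
    intro x hxb
    rw [hdeg]
    by_cases hx : x ∈ S
    · have hxa : x ≠ a := fun h => haS (h ▸ hx)
      have : H'.neighborSet x = H.neighborSet x := by
        ext y
        simp only [mem_neighborSet, hH'adj]
        refine ⟨fun h => h.1, fun h => ⟨h, fun hee => ?_⟩⟩
        rw [Sym2.eq_iff] at hee
        rcases hee with ⟨h1, h2⟩ | ⟨h1, h2⟩
        · exact hxa h1
        · exact hxb h1
      rw [hKnb x hx, this]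
      rcases (H.neighborSet x).eq_empty_or_nonempty with h | h
      · rw [h]; simp
      · rw [hcyc h]; exact even_two
    · rw [hKnb' x hx]
      simp
  have heven := K.even_card_odd_degree_vertices
  have : (Finset.univ.filter fun v => Odd (K.degree v)) = {b} := by
    ext x
    simp only [Finset.mem_filter, Finset.mem_univ, true_and, Finset.mem_singleton]
    constructor
    · intro hodd
      by_contra hxb
      exact (Nat.not_even_iff_odd.mpr hodd) (hdegeven x hxb)
    · rintro rfl
      rw [hdegb]
      exact odd_one
  rw [this] at heven
  simp at heven

lemma symmdiff_isAlternating {M N : G.Subgraph} (hM : M.IsPerfectMatching)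
    (hN : N.IsPerfectMatching) :
    (M.spanningCoe ∆ N.spanningCoe).IsAlternating M.spanningCoe := by
  intro v w w' hne hadj hadj'
  obtain ⟨m, hm⟩ := hM.1 (hM.2 v)
  obtain ⟨p, hp⟩ := hN.1 (hN.2 v)
  have hcase : ∀ x, (M.spanningCoe ∆ N.spanningCoe).Adj v x → M.Adj v x ∨ N.Adj v x := by
    intro x hx
    rw [symmDiff_def] at hx
    rcases hx with h | h
    · exact Or.inl h.1
    · exact Or.inr h.1
  simp only [Subgraph.spanningCoe_adj]
  constructor
  · intro hMw hMw'
    exact hne ((hm.2 w hMw).trans (hm.2 w' hMw').symm)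
  · intro hnMw'
    rcases hcase w' hadj' with h | h
    · exact absurd h hnMw'
    · rcases hcase w hadj with h2 | h2
      · exact h2
      · exact absurd ((hp.2 w h2).trans (hp.2 w' h).symm) hne

lemma isAlternating_cycle_altP {Γ : SimpleGraph V} {u : V} {p : Γ.Walk u u} (hp : p.IsCycle)
    (halt : Γ.IsAlternating M.spanningCoe) :
    ∀ i : Fin p.edges.length, (p.edges.get i ∈ M.edgeSet ↔
      p.edges.get ⟨(i + 1) % p.edges.length, Nat.mod_lt _ i.pos⟩ ∉ M.edgeSet) := by
  intro i
  have h3 := hp.three_le_length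
  have hel : p.edges.length = p.length := Walk.length_edges p
  obtain ⟨i, hi⟩ := i
  rw [hel] at hi
  have hmod : (i + 1) % p.edges.length = (i + 1) % p.length := by rw [hel]
  have hj : (i + 1) % p.length < p.length := Nat.mod_lt _ (by omega)
  rw [edges_get p i (by omega), edges_get]
  simp only [hmod]
  set j := (i + 1) % p.length with hjdef
  have hshared : p.getVert (i+1) = p.getVert j := (getVert_succ_mod hi).symm
  have hij : i ≠ j := by
    rcases Nat.lt_or_ge (i+1) p.length with h | h
    · rw [hjdef, Nat.mod_eq_of_lt h]; omega
    · have h1 : i + 1 = p.length := by omega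
      rw [hjdef, h1, Nat.mod_self]; omega
  have adj1 : Γ.Adj (p.getVert j) (p.getVert i) := by
    rw [← hshared]; exact (p.adj_getVert_succ hi).symm
  have adj2 : Γ.Adj (p.getVert j) (p.getVert (j+1)) := p.adj_getVert_succ hj
  have hne : p.getVert i ≠ p.getVert (j+1) := by
    intro hcon
    have e1 : p.edges.get ⟨i, by omega⟩ = p.edges.get ⟨j, by omega⟩ := by
      rw [edges_get, edges_get, hshared, hcon, Sym2.eq_swap]
    have := (List.Nodup.get_inj_iff hp.edges_nodup).mp e1
    simp only [Fin.mk.injEq] at this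
    exact hij this
  have key := halt hne adj1 adj2
  simp only [Subgraph.spanningCoe_adj] at key
  rw [hshared]
  constructor
  · intro h1 h2
    rw [Subgraph.mem_edgeSet] at h1 h2
    exact (key.mp h1.symm) h2
  · intro h1
    rw [Subgraph.mem_edgeSet] at h1 ⊢
    exact (key.mpr (fun hc => h1 (Subgraph.mem_edgeSet.mpr hc))).symm

lemma altP_congr {l l' : List (Sym2 V)} (h : l = l')
    (hP : ∀ i : Fin l.length, (l.get i ∈ M.edgeSet ↔
      l.get ⟨(i + 1) % l.length, Nat.mod_lt _ i.pos⟩ ∉ M.edgeSet)) :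
    ∀ i : Fin l'.length, (l'.get i ∈ M.edgeSet ↔
      l'.get ⟨(i + 1) % l'.length, Nat.mod_lt _ i.pos⟩ ∉ M.edgeSet) := by
  subst h; exact hP

/-- From an alternating `IsCycles` graph below `G` containing the edge `s(a,b)`,
produce an `IsAltCycle` walk in `G` through `s(a,b)`. -/
lemma exists_altCycle [Fintype V] {M : G.Subgraph} {H : SimpleGraph V}
    (halt : H.IsAlternating M.spanningCoe) (hcyc : H.IsCycles) (hHG : H ≤ G)
    {a b : V} (hab : H.Adj a b) :
    ∃ (v : V) (c : G.Walk v v), IsAltCycle G M c ∧ s(a,b) ∈ c.edges := by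
  have hreach := reach_of_isCycles hcyc hab
  obtain ⟨u, p, hpcyc, hpe⟩ :=
    (SimpleGraph.adj_and_reachable_delete_edges_iff_exists_cycle).mp ⟨hab, hreach⟩
  have hedges : (p.mapLe hHG).edges = p.edges := by
    simp only [Walk.mapLe, Walk.edges_map]
    rw [show ⇑(SimpleGraph.Hom.ofLE hHG) = id from rfl]
    simp [Sym2.map_id']
  refine ⟨u, p.mapLe hHG, ⟨hpcyc.mapLe hHG, ?_⟩, ?_⟩
  · exact altP_congr hedges.symm (isAlternating_cycle_altP hpcyc halt)
  · rw [hedges]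
    exact hpe

end AltCycleAux

open AltCycleAux

/-- In a bipartite graph `G` with a perfect matching `M`, an edge `e` lies in every
perfect matching of `G` or in no perfect matching of `G` if and only if there is no
`M`-alternating cycle in `G` containing `e`. -/
theorem forced_or_forbidden_iff_no_alternating_cycle
    {V : Type*} [Fintype V] (G : SimpleGraph V) (hbip : G.Colorable 2)
    (M : G.Subgraph) (hM : M.IsPerfectMatching)
    (e : Sym2 V) (he : e ∈ G.edgeSet) :
    ((∀ N : G.Subgraph, N.IsPerfectMatching → e ∈ N.edgeSet) ∨
      (∀ N : G.Subgraph, N.IsPerfectMatching → e ∉ N.edgeSet)) ↔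
      ¬ ∃ (v : V) (c : G.Walk v v), IsAltCycle G M c ∧ e ∈ c.edges := by
  induction e using Sym2.ind with
  | _ a b =>
  constructor
  · rintro hfor ⟨v, c, ⟨hcyc, halt⟩, hec⟩
    have hAlt := cycle_isAlternating hcyc halt
    have hCyc := cycle_isCycles hcyc
    have hle : c.toSubgraph.spanningCoe ≤ G := Subgraph.spanningCoe_le _
    obtain ⟨N, hNpm, hNe⟩ := symmdiff_pm hM hAlt hCyc hle
    have hHab : c.toSubgraph.spanningCoe.Adj a b := by
      rw [Subgraph.spanningCoe_adj, ← Subgraph.mem_edgeSet]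
      exact (Walk.mem_edges_toSubgraph c).mpr hec
    have hkey : s(a,b) ∈ N.edgeSet ↔ s(a,b) ∉ M.edgeSet := by
      rw [hNe a b]
      rw [symmDiff_def]
      simp only [SimpleGraph.sup_adj, sdiff_adj, Subgraph.spanningCoe_adj, hHab,
        Subgraph.mem_edgeSet]
      tauto
    rcases hfor with hall | hnone
    · exact (hkey.mp (hall N hNpm)) (hall M hM)
    · exact hnone N hNpm (hkey.mpr (hnone M hM))
  · intro hnocycle
    by_contra hcon
    push_neg at hcon
    obtain ⟨⟨N₁, hN₁pm, hN₁e⟩, ⟨N₂, hN₂pm, hN₂e⟩⟩ := hcon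
    by_cases heM : s(a,b) ∈ M.edgeSet
    · -- use N₁, which misses the edge
      have hadj : (M.spanningCoe ∆ N₁.spanningCoe).Adj a b := by
        rw [symmDiff_def]
        left
        simp only [sdiff_adj, Subgraph.spanningCoe_adj, ← Subgraph.mem_edgeSet]
        exact ⟨heM, hN₁e⟩
      exact hnocycle <| exists_altCycle (symmdiff_isAlternating hM hN₁pm)
        (Subgraph.IsPerfectMatching.symmDiff_isCycles hM hN₁pm)
        (symmDiff_le (le_trans M.spanningCoe_le le_sup_right)
          (le_trans N₁.spanningCoe_le le_sup_right)) hadj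
    · -- use N₂, which contains the edge
      have hadj : (M.spanningCoe ∆ N₂.spanningCoe).Adj a b := by
        rw [symmDiff_def]
        right
        simp only [sdiff_adj, Subgraph.spanningCoe_adj, ← Subgraph.mem_edgeSet]
        exact ⟨hN₂e, heM⟩
      exact hnocycle <| exists_altCycle (symmdiff_isAlternating hM hN₂pm)
        (Subgraph.IsPerfectMatching.symmDiff_isCycles hM hN₂pm)
        (symmDiff_le (le_trans M.spanningCoe_le le_sup_right)
          (le_trans N₂.spanningCoe_le le_sup_right)) hadj
end

section
/- If each edge of the complete bipartite graph K_{n,n} is subdivided into a path with k edges, where k is odd, then the resulting graph has exactly n! perfect matchings. -/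
/-- Vertices of the graph obtained from `K_{n,n}` by subdividing every edge into a path
with `k` edges: the original two sides of `K_{n,n}`, plus, for each pair `(a, b)`
(an edge of `K_{n,n}`), the `k - 1` internal vertices of the subdividing path. -/
def SubdivVertex (n k : ℕ) : Type :=
  (Fin n ⊕ Fin n) ⊕ (Fin n × Fin n × Fin (k - 1))

/-- Base relation: for each edge `(a, b)` of `K_{n,n}`, its subdividing path
`inl a, (a,b,0), (a,b,1), ..., (a,b,k-2), inr b`; when `k = 1` it is the edge itself. -/
def subdivRel (n k : ℕ) : SubdivVertex n k → SubdivVertex n k → Prop := fun x y =>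
  match x, y with
  | .inl (.inl _), .inl (.inr _) => k = 1
  | .inl (.inl u), .inr (a, _, i) => a = u ∧ (i : ℕ) = 0
  | .inl (.inr v), .inr (_, b, i) => b = v ∧ (i : ℕ) + 2 = k
  | .inr (a, b, i), .inr (a', b', j) => a = a' ∧ b = b' ∧ (j : ℕ) = (i : ℕ) + 1
  | _, _ => False

/-- `subdividedCompleteBipartite n k` is the graph `H_{n,k}` obtained from the complete
bipartite graph `K_{n,n}` by replacing each edge by a path with `k` edges. -/
def subdividedCompleteBipartite (n k : ℕ) : SimpleGraph (SubdivVertex n k) :=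
  SimpleGraph.fromRel (subdivRel n k)

namespace SubdivPf

def partnerFun (n k : ℕ) (hk : k % 2 = 1) (σ : Equiv.Perm (Fin n)) :
    SubdivVertex n k → SubdivVertex n k
  | Sum.inl (Sum.inl a) =>
      if h : 1 < k then Sum.inr (a, σ a, ⟨0, by omega⟩)
      else Sum.inl (Sum.inr (σ a))
  | Sum.inl (Sum.inr b) =>
      if h : 1 < k then Sum.inr (σ.symm b, b, ⟨k - 2, by omega⟩)
      else Sum.inl (Sum.inl (σ.symm b))
  | Sum.inr (a, b, i) =>
      if b = σ a then
        if h2 : (i : ℕ) % 2 = 0 then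
          if h0 : (i : ℕ) = 0 then Sum.inl (Sum.inl a)
          else Sum.inr (a, b, ⟨(i : ℕ) - 1, by have := i.isLt; omega⟩)
        else
          if hl : (i : ℕ) = k - 2 then Sum.inl (Sum.inr b)
          else Sum.inr (a, b, ⟨(i : ℕ) + 1, by have := i.isLt; omega⟩)
      else
        if h2 : (i : ℕ) % 2 = 0 then
          Sum.inr (a, b, ⟨(i : ℕ) + 1, by have := i.isLt; omega⟩)
        else Sum.inr (a, b, ⟨(i : ℕ) - 1, by have := i.isLt; omega⟩)

variable {n k : ℕ} (hk : k % 2 = 1) (σ : Equiv.Perm (Fin n))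

lemma pf_L (a : Fin n) (h : 1 < k) :
    partnerFun n k hk σ (Sum.inl (Sum.inl a)) = Sum.inr (a, σ a, ⟨0, by omega⟩) := by
  simp [partnerFun, h]; rfl

lemma pf_L1 (a : Fin n) (h : ¬ 1 < k) :
    partnerFun n k hk σ (Sum.inl (Sum.inl a)) = Sum.inl (Sum.inr (σ a)) := by
  simp [partnerFun, h]; rfl

lemma pf_R (b : Fin n) (h : 1 < k) :
    partnerFun n k hk σ (Sum.inl (Sum.inr b)) = Sum.inr (σ.symm b, b, ⟨k - 2, by omega⟩) := by
  simp [partnerFun, h]; rfl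

lemma pf_R1 (b : Fin n) (h : ¬ 1 < k) :
    partnerFun n k hk σ (Sum.inl (Sum.inr b)) = Sum.inl (Sum.inl (σ.symm b)) := by
  simp [partnerFun, h]; rfl

lemma pf_on_zero (a : Fin n) (i : Fin (k - 1)) (h0 : (i : ℕ) = 0) :
    partnerFun n k hk σ (Sum.inr (a, σ a, i)) = Sum.inl (Sum.inl a) := by
  simp [partnerFun, h0]; rfl

lemma pf_on_even (a : Fin n) (i : Fin (k - 1)) (h2 : (i : ℕ) % 2 = 0) (h0 : (i : ℕ) ≠ 0) :
    partnerFun n k hk σ (Sum.inr (a, σ a, i)) =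
      Sum.inr (a, σ a, ⟨(i : ℕ) - 1, by have := i.isLt; omega⟩) := by
  simp [partnerFun, h2, h0]; rfl

lemma pf_on_last (a : Fin n) (i : Fin (k - 1)) (h2 : (i : ℕ) % 2 = 1) (hl : (i : ℕ) = k - 2) :
    partnerFun n k hk σ (Sum.inr (a, σ a, i)) = Sum.inl (Sum.inr (σ a)) := by
  have h2' : ¬ (i : ℕ) % 2 = 0 := by omega
  have h2'' : ¬ (k - 2) % 2 = 0 := by have := i.isLt; omega
  simp [partnerFun, h2', h2'', hl]; rfl

lemma pf_on_odd (a : Fin n) (i : Fin (k - 1)) (h2 : (i : ℕ) % 2 = 1) (hl : (i : ℕ) ≠ k - 2) :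
    partnerFun n k hk σ (Sum.inr (a, σ a, i)) =
      Sum.inr (a, σ a, ⟨(i : ℕ) + 1, by have := i.isLt; omega⟩) := by
  simp [partnerFun, h2, hl]; rfl

lemma pf_off_even (a b : Fin n) (i : Fin (k - 1)) (hb : b ≠ σ a) (h2 : (i : ℕ) % 2 = 0) :
    partnerFun n k hk σ (Sum.inr (a, b, i)) =
      Sum.inr (a, b, ⟨(i : ℕ) + 1, by have := i.isLt; omega⟩) := by
  simp [partnerFun, hb, h2]; rfl

lemma pf_off_odd (a b : Fin n) (i : Fin (k - 1)) (hb : b ≠ σ a) (h2 : (i : ℕ) % 2 = 1) :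
    partnerFun n k hk σ (Sum.inr (a, b, i)) =
      Sum.inr (a, b, ⟨(i : ℕ) - 1, by have := i.isLt; omega⟩) := by
  simp [partnerFun, hb, h2]; rfl

lemma partnerFun_invol (x : SubdivVertex n k) :
    partnerFun n k hk σ (partnerFun n k hk σ x) = x := by
  rcases x with (a | b) | ⟨a, b, i⟩
  · by_cases h : 1 < k
    · rw [pf_L hk σ a h, pf_on_zero hk σ a _ rfl]
    · rw [pf_L1 hk σ a h, pf_R1 hk σ _ h, Equiv.symm_apply_apply]
  · by_cases h : 1 < k
    · obtain ⟨c, rfl⟩ : ∃ c, b = σ c := ⟨σ.symm b, (Equiv.apply_symm_apply σ b).symm⟩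
      rw [pf_R hk σ _ h, Equiv.symm_apply_apply]
      have h2 : ((⟨k - 2, by omega⟩ : Fin (k - 1)) : ℕ) % 2 = 1 := by simp; omega
      rw [pf_on_last hk σ _ _ h2 (by simp)]
    · rw [pf_R1 hk σ b h, pf_L1 hk σ _ h, Equiv.apply_symm_apply]
  · have hi := i.isLt
    by_cases hb : b = σ a
    · subst hb
      rcases Nat.even_or_odd (i : ℕ) with h2 | h2
      · rw [Nat.even_iff] at h2
        by_cases h0 : (i : ℕ) = 0
        · rw [pf_on_zero hk σ a i h0, pf_L hk σ a (by omega)]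
          exact congrArg _ (by simp [Prod.ext_iff, Fin.ext_iff, h0.symm])
        · rw [pf_on_even hk σ a i h2 h0,
            pf_on_odd hk σ a _ (by simp; omega) (by simp; omega)]
          exact congrArg _ (by simp [Prod.ext_iff, Fin.ext_iff]; omega)
      · rw [Nat.odd_iff] at h2
        by_cases hl : (i : ℕ) = k - 2
        · rw [pf_on_last hk σ a i h2 hl, pf_R hk σ _ (by omega), Equiv.symm_apply_apply]
          exact congrArg _ (by simp [Prod.ext_iff, Fin.ext_iff]; omega)
        · rw [pf_on_odd hk σ a i h2 hl,
            pf_on_even hk σ a _ (by simp; omega) (by simp)]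
          exact congrArg _ (by simp [Prod.ext_iff, Fin.ext_iff])
    · rcases Nat.even_or_odd (i : ℕ) with h2 | h2
      · rw [Nat.even_iff] at h2
        rw [pf_off_even hk σ a b i hb h2, pf_off_odd hk σ a b _ hb (by simp; omega)]
        exact congrArg _ (by simp [Prod.ext_iff, Fin.ext_iff])
      · rw [Nat.odd_iff] at h2
        rw [pf_off_odd hk σ a b i hb h2, pf_off_even hk σ a b _ hb (by simp; omega)]
        exact congrArg _ (by simp [Prod.ext_iff, Fin.ext_iff]; omega)


open SimpleGraph

lemma pf_adj (x : SubdivVertex n k) :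
    (subdividedCompleteBipartite n k).Adj x (partnerFun n k hk σ x) := by
  rcases x with (a | b) | ⟨a, b, i⟩
  · by_cases h : 1 < k
    · rw [pf_L hk σ a h]
      erw [subdividedCompleteBipartite, SimpleGraph.fromRel_adj]
      simp [subdividedCompleteBipartite, SimpleGraph.fromRel_adj, subdivRel]
      exact Sum.inl_ne_inr
    · rw [pf_L1 hk σ a h]
      erw [subdividedCompleteBipartite, SimpleGraph.fromRel_adj]
      simp [subdividedCompleteBipartite, SimpleGraph.fromRel_adj, subdivRel]
      exact ⟨fun hcon => by simpa using Sum.inl.inj hcon, by omega⟩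
  · by_cases h : 1 < k
    · rw [pf_R hk σ b h]
      erw [subdividedCompleteBipartite, SimpleGraph.fromRel_adj]
      simp [subdividedCompleteBipartite, SimpleGraph.fromRel_adj, subdivRel]
      exact ⟨Sum.inl_ne_inr, by omega⟩
    · rw [pf_R1 hk σ b h]
      erw [subdividedCompleteBipartite, SimpleGraph.fromRel_adj]
      simp [subdividedCompleteBipartite, SimpleGraph.fromRel_adj, subdivRel]
      exact ⟨fun hcon => by simpa using Sum.inl.inj hcon, by omega⟩
  · have hi := i.isLt
    by_cases hb : b = σ a
    · subst hb
      rcases Nat.even_or_odd (i : ℕ) with h2 | h2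
      · rw [Nat.even_iff] at h2
        by_cases h0 : (i : ℕ) = 0
        · rw [pf_on_zero hk σ a i h0]
          erw [subdividedCompleteBipartite, SimpleGraph.fromRel_adj]
          simp [subdividedCompleteBipartite, SimpleGraph.fromRel_adj, subdivRel, h0]
          exact Sum.inr_ne_inl
        · rw [pf_on_even hk σ a i h2 h0]
          erw [subdividedCompleteBipartite, SimpleGraph.fromRel_adj]
          simp [subdividedCompleteBipartite, SimpleGraph.fromRel_adj, subdivRel,
            Fin.ext_iff]
          refine ⟨fun hcon => ?_, by omega⟩
          have := Sum.inr.inj hcon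
          simp [Prod.ext_iff, Fin.ext_iff] at this
          omega
      · rw [Nat.odd_iff] at h2
        by_cases hl : (i : ℕ) = k - 2
        · rw [pf_on_last hk σ a i h2 hl]
          erw [subdividedCompleteBipartite, SimpleGraph.fromRel_adj]
          simp [subdividedCompleteBipartite, SimpleGraph.fromRel_adj, subdivRel]
          exact ⟨Sum.inr_ne_inl, by omega⟩
        · rw [pf_on_odd hk σ a i h2 hl]
          erw [subdividedCompleteBipartite, SimpleGraph.fromRel_adj]
          simp [subdividedCompleteBipartite, SimpleGraph.fromRel_adj, subdivRel,
            Fin.ext_iff]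
          intro hcon
          have := Sum.inr.inj hcon
          simp [Prod.ext_iff, Fin.ext_iff] at this
    · rcases Nat.even_or_odd (i : ℕ) with h2 | h2
      · rw [Nat.even_iff] at h2
        rw [pf_off_even hk σ a b i hb h2]
        erw [subdividedCompleteBipartite, SimpleGraph.fromRel_adj]
        simp [subdividedCompleteBipartite, SimpleGraph.fromRel_adj, subdivRel, Fin.ext_iff]
        intro hcon
        have := Sum.inr.inj hcon
        simp [Prod.ext_iff, Fin.ext_iff] at this
      · rw [Nat.odd_iff] at h2
        rw [pf_off_odd hk σ a b i hb h2]
        erw [subdividedCompleteBipartite, SimpleGraph.fromRel_adj]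
        simp [subdividedCompleteBipartite, SimpleGraph.fromRel_adj, subdivRel, Fin.ext_iff]
        refine ⟨fun hcon => ?_, by omega⟩
        have := Sum.inr.inj hcon
        simp [Prod.ext_iff, Fin.ext_iff] at this
        omega

def matchingOf : (subdividedCompleteBipartite n k).Subgraph where
  verts := Set.univ
  Adj x y := partnerFun n k hk σ x = y
  adj_sub h := h ▸ pf_adj hk σ _
  edge_vert _ := Set.mem_univ _
  symm := ⟨fun x y h => by
    rw [← h, partnerFun_invol hk σ]⟩

lemma matchingOf_isPerfectMatching : (matchingOf hk σ).IsPerfectMatching := by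
  constructor
  · intro v _
    exact ⟨partnerFun n k hk σ v, rfl, fun w h => Eq.symm h⟩
  · intro v
    exact Set.mem_univ _

lemma matchingOf_inj : Function.Injective (matchingOf (n := n) (k := k) hk) := by
  intro σ τ h
  have key : ∀ x, partnerFun n k hk τ x = partnerFun n k hk σ x := by
    intro x
    have hx : (matchingOf hk σ).Adj x (partnerFun n k hk σ x) := rfl
    rw [h] at hx
    exact hx
  ext a
  have hkey := key (Sum.inl (Sum.inl a))
  by_cases h1 : 1 < k
  · rw [pf_L hk σ a h1, pf_L hk τ a h1] at hkey
    have := Sum.inr.inj hkey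
    simp only [Prod.mk.injEq] at this
    exact congrArg Fin.val this.2.1.symm
  · rw [pf_L1 hk σ a h1, pf_L1 hk τ a h1] at hkey
    have := Sum.inr.inj (Sum.inl.inj hkey)
    exact congrArg Fin.val this.symm


lemma adj_L {a : Fin n} {w : SubdivVertex n k}
    (h : (subdividedCompleteBipartite n k).Adj (Sum.inl (Sum.inl a)) w) :
    (k = 1 ∧ ∃ v, w = Sum.inl (Sum.inr v)) ∨
      (∃ (b : Fin n) (i : Fin (k - 1)), (i : ℕ) = 0 ∧ w = Sum.inr (a, b, i)) := by
  erw [subdividedCompleteBipartite, SimpleGraph.fromRel_adj] at h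
  obtain ⟨hne, h⟩ := h
  rcases w with (u | v) | ⟨a', b, i⟩
  · simp only [subdivRel, or_self] at h
  · left
    simp only [subdivRel, or_false] at h
    exact ⟨h, v, rfl⟩
  · right
    simp only [subdivRel, or_false] at h
    exact ⟨b, i, h.2, by rw [h.1]⟩

lemma adj_R {v : Fin n} {w : SubdivVertex n k}
    (h : (subdividedCompleteBipartite n k).Adj (Sum.inl (Sum.inr v)) w) :
    (k = 1 ∧ ∃ u, w = Sum.inl (Sum.inl u)) ∨
      (∃ (a : Fin n) (i : Fin (k - 1)), (i : ℕ) + 2 = k ∧ w = Sum.inr (a, v, i)) := by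
  erw [subdividedCompleteBipartite, SimpleGraph.fromRel_adj] at h
  obtain ⟨hne, h⟩ := h
  rcases w with (u | v') | ⟨a, b, i⟩
  · left
    simp only [subdivRel, false_or] at h
    exact ⟨h, u, rfl⟩
  · simp only [subdivRel, or_self] at h
  · right
    simp only [subdivRel, or_false] at h
    exact ⟨a, i, h.2, by rw [h.1]⟩

lemma adj_I {a b : Fin n} {i : Fin (k - 1)} {w : SubdivVertex n k}
    (h : (subdividedCompleteBipartite n k).Adj (Sum.inr (a, b, i)) w) :
    (w = Sum.inl (Sum.inl a) ∧ (i : ℕ) = 0) ∨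
      (w = Sum.inl (Sum.inr b) ∧ (i : ℕ) + 2 = k) ∨
      (∃ j : Fin (k - 1), w = Sum.inr (a, b, j) ∧
        ((j : ℕ) = (i : ℕ) + 1 ∨ (i : ℕ) = (j : ℕ) + 1)) := by
  erw [subdividedCompleteBipartite, SimpleGraph.fromRel_adj] at h
  obtain ⟨hne, h⟩ := h
  rcases w with (u | v) | ⟨a', b', j⟩
  · left
    simp only [subdivRel, false_or] at h
    exact ⟨by rw [h.1], h.2⟩
  · right; left
    simp only [subdivRel, false_or] at h
    exact ⟨by rw [h.1], h.2⟩
  · right; right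
    simp only [subdivRel] at h
    rcases h with ⟨rfl, rfl, hj⟩ | ⟨rfl, rfl, hj⟩
    · exact ⟨j, rfl, Or.inl hj⟩
    · exact ⟨j, rfl, Or.inr hj⟩

variable {M : (subdividedCompleteBipartite n k).Subgraph}

noncomputable def mp (hM : M.IsPerfectMatching) (v : SubdivVertex n k) : SubdivVertex n k :=
  (hM.1 (hM.2 v)).choose

lemma mp_adj (hM : M.IsPerfectMatching) (v : SubdivVertex n k) : M.Adj v (mp hM v) :=
  (hM.1 (hM.2 v)).choose_spec.1

lemma mp_eq (hM : M.IsPerfectMatching) {v w : SubdivVertex n k} (h : M.Adj v w) :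
    mp hM v = w :=
  ((hM.1 (hM.2 v)).choose_spec.2 w h).symm

lemma mp_invol (hM : M.IsPerfectMatching) (v : SubdivVertex n k) : mp hM (mp hM v) = v :=
  mp_eq hM ((mp_adj hM v).symm)


lemma on_all (hM : M.IsPerfectMatching) (a b : Fin n)
    (h0 : ∀ i : Fin (k - 1), (i : ℕ) = 0 → mp hM (Sum.inr (a, b, i)) = Sum.inl (Sum.inl a)) :
    ∀ i : Fin (k - 1),
      ((i : ℕ) % 2 = 0 → ∀ j : Fin (k - 1), (j : ℕ) + 1 = (i : ℕ) →
        mp hM (Sum.inr (a, b, i)) = Sum.inr (a, b, j)) ∧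
      ((i : ℕ) % 2 = 1 → ∀ j : Fin (k - 1), (j : ℕ) = (i : ℕ) + 1 →
        mp hM (Sum.inr (a, b, i)) = Sum.inr (a, b, j)) ∧
      ((i : ℕ) % 2 = 1 → (i : ℕ) = k - 2 →
        mp hM (Sum.inr (a, b, i)) = Sum.inl (Sum.inr b)) := by
  suffices H : ∀ N (i : Fin (k - 1)), (i : ℕ) = N →
      ((i : ℕ) % 2 = 0 → ∀ j : Fin (k - 1), (j : ℕ) + 1 = (i : ℕ) →
        mp hM (Sum.inr (a, b, i)) = Sum.inr (a, b, j)) ∧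
      ((i : ℕ) % 2 = 1 → ∀ j : Fin (k - 1), (j : ℕ) = (i : ℕ) + 1 →
        mp hM (Sum.inr (a, b, i)) = Sum.inr (a, b, j)) ∧
      ((i : ℕ) % 2 = 1 → (i : ℕ) = k - 2 →
        mp hM (Sum.inr (a, b, i)) = Sum.inl (Sum.inr b)) by
    exact fun i => H (i : ℕ) i rfl
  intro N
  induction N using Nat.strong_induction_on with
  | _ N IH =>
  intro i hiN
  have hi := i.isLt
  have hprev : ∀ j : Fin (k - 1), (j : ℕ) + 1 = (i : ℕ) → (i : ℕ) % 2 = 1 →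
      mp hM (Sum.inr (a, b, i)) ≠ Sum.inr (a, b, j) := by
    intro j hj hodd hcon
    have hback : mp hM (Sum.inr (a, b, j)) = Sum.inr (a, b, i) := by
      have h' := mp_invol hM (Sum.inr (a, b, i))
      rw [hcon] at h'
      exact h'
    by_cases h0' : (j : ℕ) = 0
    · rw [h0 j h0'] at hback
      exact Sum.inl_ne_inr hback
    · have hval := (IH (j : ℕ) (by omega) j rfl).1 (by omega)
        ⟨(j : ℕ) - 1, by have := j.isLt; omega⟩ (by simp; omega)
      rw [hval] at hback
      have h2 := Sum.inr.inj hback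
      simp [Prod.ext_iff, Fin.ext_iff] at h2
      omega
  refine ⟨?_, ?_, ?_⟩
  · -- i even, partner is i - 1
    intro h2 j hj
    have hji : mp hM (Sum.inr (a, b, j)) = Sum.inr (a, b, i) :=
      (IH (j : ℕ) (by omega) j rfl).2.1 (by omega) i (by omega)
    have h' := mp_invol hM (Sum.inr (a, b, j))
    rw [hji] at h'
    exact h'
  · -- i odd, not last: partner is i + 1
    intro h2 j hj
    have hjlt := j.isLt
    rcases adj_I (M.adj_sub (mp_adj hM (Sum.inr (a, b, i)))) with ⟨hw, hi0⟩ | ⟨hw, hik⟩ |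
      ⟨j', hw, hj'⟩
    · omega
    · omega
    · rcases hj' with h | h
      · have : j' = j := Fin.ext (by omega)
        rw [hw, this]
      · exact absurd hw (hprev j' (by omega) h2)
  · -- i odd, last: partner is the right endpoint
    intro h2 hl
    rcases adj_I (M.adj_sub (mp_adj hM (Sum.inr (a, b, i)))) with ⟨hw, hi0⟩ | ⟨hw, hik⟩ |
      ⟨j', hw, hj'⟩
    · omega
    · exact hw
    · rcases hj' with h | h
      · have := j'.isLt
        omega
      · exact absurd hw (hprev j' (by omega) h2)

lemma off_all (hM : M.IsPerfectMatching) (hk : k % 2 = 1) (a b : Fin n)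
    (h0 : ∀ i j : Fin (k - 1), (i : ℕ) = 0 → (j : ℕ) = 1 →
      mp hM (Sum.inr (a, b, i)) = Sum.inr (a, b, j)) :
    ∀ i : Fin (k - 1),
      ((i : ℕ) % 2 = 0 → ∀ j : Fin (k - 1), (j : ℕ) = (i : ℕ) + 1 →
        mp hM (Sum.inr (a, b, i)) = Sum.inr (a, b, j)) ∧
      ((i : ℕ) % 2 = 1 → ∀ j : Fin (k - 1), (j : ℕ) + 1 = (i : ℕ) →
        mp hM (Sum.inr (a, b, i)) = Sum.inr (a, b, j)) := by
  suffices H : ∀ N (i : Fin (k - 1)), (i : ℕ) = N →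
      ((i : ℕ) % 2 = 0 → ∀ j : Fin (k - 1), (j : ℕ) = (i : ℕ) + 1 →
        mp hM (Sum.inr (a, b, i)) = Sum.inr (a, b, j)) ∧
      ((i : ℕ) % 2 = 1 → ∀ j : Fin (k - 1), (j : ℕ) + 1 = (i : ℕ) →
        mp hM (Sum.inr (a, b, i)) = Sum.inr (a, b, j)) by
    exact fun i => H (i : ℕ) i rfl
  intro N
  induction N using Nat.strong_induction_on with
  | _ N IH =>
  intro i hiN
  have hi := i.isLt
  refine ⟨?_, ?_⟩
  · -- i even: partner is i + 1
    intro h2 j hj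
    by_cases h0' : (i : ℕ) = 0
    · exact h0 i j h0' (by omega)
    · have hprev : mp hM (Sum.inr (a, b, i)) ≠ Sum.inr (a, b, ⟨(i : ℕ) - 1, by omega⟩) := by
        intro hcon
        have hback : mp hM (Sum.inr (a, b, ⟨(i : ℕ) - 1, by omega⟩)) = Sum.inr (a, b, i) := by
          have h' := mp_invol hM (Sum.inr (a, b, i))
          rw [hcon] at h'
          exact h'
        have hval := (IH ((i : ℕ) - 1) (by omega) ⟨(i : ℕ) - 1, by omega⟩ rfl).2
          (by simp; omega) ⟨(i : ℕ) - 2, by omega⟩ (by simp; omega)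
        rw [hval] at hback
        have h3 := Sum.inr.inj hback
        simp [Prod.ext_iff, Fin.ext_iff] at h3
        omega
      have hjlt := j.isLt
      rcases adj_I (M.adj_sub (mp_adj hM (Sum.inr (a, b, i)))) with ⟨hw, hi0⟩ | ⟨hw, hik⟩ |
        ⟨j', hw, hj'⟩
      · omega
      · omega
      · rcases hj' with h | h
        · have : j' = j := Fin.ext (by omega)
          rw [hw, this]
        · exfalso
          apply hprev
          rw [hw]
          exact congrArg _ (by simp [Prod.ext_iff, Fin.ext_iff]; omega)
  · -- i odd: partner is i - 1
    intro h2 j hj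
    have hji : mp hM (Sum.inr (a, b, j)) = Sum.inr (a, b, i) :=
      (IH (j : ℕ) (by omega) j rfl).1 (by omega) i (by omega)
    have h' := mp_invol hM (Sum.inr (a, b, j))
    rw [hji] at h'
    exact h'


lemma matchingOf_eq (hM : M.IsPerfectMatching)
    (hpt : ∀ x, mp hM x = partnerFun n k hk σ x) : matchingOf hk σ = M := by
  apply SimpleGraph.Subgraph.ext
  · exact (Set.eq_univ_of_forall hM.2).symm
  · funext x y
    apply propext
    constructor
    · intro h
      have hxy : mp hM x = y := by rw [hpt]; exact h
      rw [← hxy]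
      exact mp_adj hM x
    · intro h
      have hxy := mp_eq hM h
      rw [hpt] at hxy
      exact hxy

lemma exists_sigma (hM : M.IsPerfectMatching) :
    ∃ σ : Equiv.Perm (Fin n), matchingOf hk σ = M := by
  by_cases hk1 : 1 < k
  · -- main case: k ≥ 3
    have hF : ∀ a : Fin n, ∃ b : Fin n, ∀ i : Fin (k - 1), (i : ℕ) = 0 →
        mp hM (Sum.inl (Sum.inl a)) = Sum.inr (a, b, i) := by
      intro a
      rcases adj_L (M.adj_sub (mp_adj hM (Sum.inl (Sum.inl a)))) with ⟨h1, _⟩ | ⟨b, i, hi, hw⟩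
      · omega
      · exact ⟨b, fun i' hi' => by rwa [show i' = i from Fin.ext (by omega)]⟩
    choose F hF using hF
    have hON0 : ∀ (a : Fin n) (i : Fin (k - 1)), (i : ℕ) = 0 →
        mp hM (Sum.inr (a, F a, i)) = Sum.inl (Sum.inl a) := by
      intro a i hi
      have h' := mp_invol hM (Sum.inl (Sum.inl a))
      rw [hF a i hi] at h'
      exact h'
    have hONall := fun a => on_all hM a (F a) (hON0 a)
    have hR : ∀ (a : Fin n) (i : Fin (k - 1)), (i : ℕ) = k - 2 →
        mp hM (Sum.inl (Sum.inr (F a))) = Sum.inr (a, F a, i) := by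
      intro a i hi
      have h1 : mp hM (Sum.inr (a, F a, i)) = Sum.inl (Sum.inr (F a)) :=
        (hONall a i).2.2 (by have := i.isLt; omega) hi
      have h' := mp_invol hM (Sum.inr (a, F a, i))
      rw [h1] at h'
      exact h'
    have hFinj : Function.Injective F := by
      intro a a' haa
      have h1 := hR a ⟨k - 2, by omega⟩ rfl
      have h2 := hR a' ⟨k - 2, by omega⟩ rfl
      rw [haa] at h1
      have h3 := Sum.inr.inj (h1.symm.trans h2)
      simp only [Prod.mk.injEq] at h3
      exact h3.1
    let σ : Equiv.Perm (Fin n) := Equiv.ofBijective F (Finite.injective_iff_bijective.mp hFinj)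
    have hσ : ∀ a, σ a = F a := fun a => rfl
    have hOFF0 : ∀ (a b : Fin n), b ≠ F a → ∀ i j : Fin (k - 1), (i : ℕ) = 0 → (j : ℕ) = 1 →
        mp hM (Sum.inr (a, b, i)) = Sum.inr (a, b, j) := by
      intro a b hb i j hi hj
      rcases adj_I (M.adj_sub (mp_adj hM (Sum.inr (a, b, i)))) with ⟨hw, _⟩ | ⟨_, hik⟩ |
        ⟨j', hw, hj'⟩
      · exfalso
        have h' := mp_invol hM (Sum.inr (a, b, i))
        rw [hw] at h'
        have h3 := Sum.inr.inj ((hF a i hi).symm.trans h')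
        simp only [Prod.mk.injEq] at h3
        exact hb h3.2.1.symm
      · omega
      · rcases hj' with h | h
        · rw [hw, show j' = j from Fin.ext (by omega)]
        · omega
    have hpt : ∀ x, mp hM x = partnerFun n k hk σ x := by
      intro x
      rcases x with (a | b) | ⟨a, b, i⟩
      · rw [pf_L hk σ a hk1, hσ a]
        exact hF a ⟨0, by omega⟩ rfl
      · rw [pf_R hk σ b hk1]
        obtain ⟨a, rfl⟩ := (Finite.injective_iff_bijective.mp hFinj).2 b
        have hsymm : σ.symm (F a) = a := σ.symm_apply_eq.mpr (hσ a).symm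
        rw [hsymm]
        exact hR a ⟨k - 2, by omega⟩ rfl
      · have hi := i.isLt
        by_cases hb : b = F a
        · subst hb
          rw [show (Sum.inr (a, F a, i) : SubdivVertex n k) = Sum.inr (a, σ a, i) from
            by rw [hσ a]]
          rcases Nat.even_or_odd (i : ℕ) with h2 | h2
          · rw [Nat.even_iff] at h2
            by_cases h0' : (i : ℕ) = 0
            · rw [pf_on_zero hk σ a i h0']
              exact hON0 a i h0'
            · rw [pf_on_even hk σ a i h2 h0']
              exact (hONall a i).1 h2 ⟨(i : ℕ) - 1, by omega⟩ (by simp; omega)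
          · rw [Nat.odd_iff] at h2
            by_cases hl : (i : ℕ) = k - 2
            · rw [pf_on_last hk σ a i h2 hl, hσ a]
              exact (hONall a i).2.2 h2 hl
            · rw [pf_on_odd hk σ a i h2 hl]
              exact (hONall a i).2.1 h2 ⟨(i : ℕ) + 1, by omega⟩ (by simp)
        · have hb' : b ≠ σ a := by rw [hσ a]; exact hb
          have hOFFall := off_all hM hk a b (hOFF0 a b hb)
          rcases Nat.even_or_odd (i : ℕ) with h2 | h2
          · rw [Nat.even_iff] at h2
            rw [pf_off_even hk σ a b i hb' h2]
            exact (hOFFall i).1 h2 ⟨(i : ℕ) + 1, by omega⟩ (by simp)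
          · rw [Nat.odd_iff] at h2
            rw [pf_off_odd hk σ a b i hb' h2]
            exact (hOFFall i).2 h2 ⟨(i : ℕ) - 1, by omega⟩ (by simp; omega)
    exact ⟨σ, matchingOf_eq hk σ hM hpt⟩
  · -- k = 1
    have hk1' : k = 1 := by omega
    have hF : ∀ a : Fin n, ∃ b : Fin n,
        mp hM (Sum.inl (Sum.inl a)) = Sum.inl (Sum.inr b) := by
      intro a
      rcases adj_L (M.adj_sub (mp_adj hM (Sum.inl (Sum.inl a)))) with ⟨_, v, hw⟩ |
        ⟨b, i, hi, hw⟩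
      · exact ⟨v, hw⟩
      · exact absurd i.isLt (by omega)
    choose F hF using hF
    have hR : ∀ a : Fin n, mp hM (Sum.inl (Sum.inr (F a))) = Sum.inl (Sum.inl a) := by
      intro a
      have h' := mp_invol hM (Sum.inl (Sum.inl a))
      rw [hF a] at h'
      exact h'
    have hFinj : Function.Injective F := by
      intro a a' haa
      have h1 := hR a
      rw [haa] at h1
      have h2 := Sum.inl.inj (h1.symm.trans (hR a'))
      exact Sum.inl.inj h2
    let σ : Equiv.Perm (Fin n) := Equiv.ofBijective F (Finite.injective_iff_bijective.mp hFinj)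
    have hσ : ∀ a, σ a = F a := fun a => rfl
    have hpt : ∀ x, mp hM x = partnerFun n k hk σ x := by
      intro x
      rcases x with (a | b) | ⟨a, b, i⟩
      · rw [pf_L1 hk σ a hk1, hσ a]
        exact hF a
      · rw [pf_R1 hk σ b hk1]
        obtain ⟨a, rfl⟩ := (Finite.injective_iff_bijective.mp hFinj).2 b
        have hsymm : σ.symm (F a) = a := σ.symm_apply_eq.mpr (hσ a).symm
        rw [hsymm]
        exact hR a
      · exact absurd i.isLt (by omega)
    exact ⟨σ, matchingOf_eq hk σ hM hpt⟩

end SubdivPf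

/-- If each edge of `K_{n,n}` is subdivided into a path with `k` edges, `k` odd, then the
resulting graph has exactly `n!` perfect matchings. -/
theorem subdivided_complete_bipartite_card_perfect_matchings (n k : ℕ) (hk : Odd k) :
    {M : (subdividedCompleteBipartite n k).Subgraph | M.IsPerfectMatching}.ncard =
      n.factorial := by
  have hk1 : k % 2 = 1 := Nat.odd_iff.mp hk
  have hset : {M : (subdividedCompleteBipartite n k).Subgraph | M.IsPerfectMatching} =
      Set.range (SubdivPf.matchingOf hk1) := by
    ext M
    simp only [Set.mem_setOf_eq, Set.mem_range]
    constructor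
    · intro h
      exact SubdivPf.exists_sigma hk1 h
    · rintro ⟨σ, rfl⟩
      exact SubdivPf.matchingOf_isPerfectMatching hk1 σ
  rw [hset, ← Set.image_univ, Set.ncard_image_of_injective _ (SubdivPf.matchingOf_inj hk1),
    Set.ncard_univ, Nat.card_eq_fintype_card, Fintype.card_perm, Fintype.card_fin]
end

section
/- Any two distinct perfect matchings of the graph obtained from K_{n,n} by subdividing each edge into a path with k edges (k odd, k ≥ 1) differ in at least 4k edges, i.e., their symmetric difference has cardinality at least 4k. -/
namespace Subdiv

def pv (n k : ℕ) (a b : Fin n) (j : ℕ) : SubdivVertex n k :=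
  if h0 : j = 0 then .inl (.inl a)
  else if h : j < k then .inr (a, b, ⟨j - 1, by omega⟩)
  else .inl (.inr b)

lemma pv_zero (n k : ℕ) (a b : Fin n) : pv n k a b 0 = .inl (.inl a) := by simp [pv]; exact rfl

lemma pv_mid (n k : ℕ) (a b : Fin n) {j : ℕ} (h1 : 1 ≤ j) (h2 : j < k) :
    pv n k a b j = .inr (a, b, ⟨j - 1, by omega⟩) := by
  unfold pv; exact (dif_neg (show ¬ j = 0 by omega)).trans (dif_pos h2)

lemma pv_last (n k : ℕ) (a b : Fin n) (hk : 1 ≤ k) : pv n k a b k = .inl (.inr b) := by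
  unfold pv; exact (dif_neg (show ¬ k = 0 by omega)).trans (dif_neg (lt_irrefl k))

lemma pv_inj {n k : ℕ} {a b a' b' : Fin n} {j j' : ℕ} (hk : 1 ≤ k)
    (hj : j ≤ k) (hj' : j' ≤ k) (h : pv n k a b j = pv n k a' b' j') :
    j = j' ∧ ((j = 0 ∧ a = a') ∨ (j = k ∧ b = b') ∨ (a = a' ∧ b = b')) := by
  unfold pv SubdivVertex at h
  split_ifs at h with c1 c2 c3 c4
  all_goals injection h with h1
  all_goals try (injection h1; done)
  all_goals first
    | (injection h1 with h2; exact ⟨by omega, Or.inl ⟨c1, h2⟩⟩)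
    | (injection h1 with h2; exact ⟨by omega, Or.inr (Or.inl ⟨by omega, h2⟩)⟩)
    | (simp only [Prod.mk.injEq, Fin.mk.injEq] at h1;
       obtain ⟨e1, e2, e3⟩ := h1;
       exact ⟨by omega, Or.inr (Or.inr ⟨e1, e2⟩)⟩)

lemma pv_ne {n k : ℕ} {a b a' b' : Fin n} {j j' : ℕ} (hk : 1 ≤ k)
    (hj : j ≤ k) (hj' : j' ≤ k) (hne : j ≠ j') : pv n k a b j ≠ pv n k a' b' j' :=
  fun h => hne (pv_inj hk hj hj' h).1

/-- the `j`-th edge of the subdividing path. -/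
def pe (n k : ℕ) (a b : Fin n) (j : ℕ) : Sym2 (SubdivVertex n k) :=
  s(pv n k a b j, pv n k a b (j + 1))

lemma adj_pe {n k : ℕ} (a b : Fin n) {j : ℕ} (hj : j < k) :
    (subdividedCompleteBipartite n k).Adj (pv n k a b j) (pv n k a b (j + 1)) := by
  rw [subdividedCompleteBipartite, SimpleGraph.fromRel_adj]
  refine ⟨pv_ne (by omega) (by omega) (by omega) (by omega), ?_⟩
  by_cases h0 : j = 0
  · subst h0
    by_cases h1 : k = 1
    · subst h1
      rw [pv_zero, show (0 + 1 : ℕ) = 1 from rfl, pv_last n 1 a b le_rfl]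
      exact Or.inl rfl
    · rw [pv_zero, pv_mid n k a b (j := 0 + 1) (by omega) (by omega)]
      exact Or.inl ⟨rfl, rfl⟩
  · by_cases h2 : j + 1 < k
    · rw [pv_mid n k a b (by omega) hj, pv_mid n k a b (by omega) h2]
      exact Or.inl ⟨rfl, rfl, by show j + 1 - 1 = j - 1 + 1; omega⟩
    · have hjk : j + 1 = k := by omega
      rw [pv_mid n k a b (by omega) hj, hjk, pv_last n k a b (by omega)]
      exact Or.inr ⟨rfl, by show j - 1 + 2 = k; omega⟩

lemma rel_char {n k : ℕ} (hk : 1 ≤ k) {x y : SubdivVertex n k}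
    (hrel : subdivRel n k x y) :
    ∃ a b j, j < k ∧ ((x = pv n k a b j ∧ y = pv n k a b (j + 1)) ∨
      (y = pv n k a b j ∧ x = pv n k a b (j + 1))) := by
  rcases x with (u | v) | ⟨a, c, i⟩ <;> rcases y with (u' | v') | ⟨a', c', i'⟩ <;>
    simp only [subdivRel] at hrel
  · -- inl inl u, inl inr v', k = 1
    refine ⟨u, v', 0, by omega, Or.inl ⟨(pv_zero ..).symm, ?_⟩⟩
    rw [show (0 + 1 : ℕ) = k by omega, pv_last n k u v' hk]
  · -- inl inl u, inr (a', c', i'); a' = u, i' = 0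
    obtain ⟨rfl, hi⟩ := hrel
    have hk2 : 2 ≤ k := by have := i'.2; omega
    refine ⟨a', c', 0, by omega, Or.inl ⟨(pv_zero ..).symm, ?_⟩⟩
    rw [pv_mid n k a' c' (j := 0 + 1) (by omega) (by omega)]
    exact congrArg (fun t : Fin (k - 1) => (Sum.inr (a', c', t) : SubdivVertex n k))
      (Fin.ext (show (i' : ℕ) = 0 + 1 - 1 by omega))
  · -- inl inr v, inr (a', c', i'); c' = v, i' + 2 = k
    obtain ⟨rfl, hi⟩ := hrel
    have hk2 : 2 ≤ k := by omega
    refine ⟨a', c', k - 1, by omega, Or.inr ⟨?_, ?_⟩⟩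
    · rw [pv_mid n k a' c' (by omega) (by omega)]
      exact congrArg (fun t : Fin (k - 1) => (Sum.inr (a', c', t) : SubdivVertex n k))
        (Fin.ext (show (i' : ℕ) = k - 1 - 1 by omega))
    · rw [show k - 1 + 1 = k by omega, pv_last n k a' c' hk]
  · -- inr inr
    obtain ⟨rfl, rfl, hij⟩ := hrel
    have hik : (i : ℕ) + 1 < k - 1 := by have := i'.2; omega
    refine ⟨a, c, (i : ℕ) + 1, by omega, Or.inl ⟨?_, ?_⟩⟩
    · rw [pv_mid n k a c (by omega) (by omega)]
      exact congrArg (fun t : Fin (k - 1) => (Sum.inr (a, c, t) : SubdivVertex n k))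
        (Fin.ext (show (i : ℕ) = (i : ℕ) + 1 - 1 by omega))
    · rw [pv_mid n k a c (by omega) (by omega)]
      exact congrArg (fun t : Fin (k - 1) => (Sum.inr (a, c, t) : SubdivVertex n k))
        (Fin.ext (show (i' : ℕ) = (i : ℕ) + 1 + 1 - 1 by omega))

lemma adj_char {n k : ℕ} (hk : 1 ≤ k) {x y : SubdivVertex n k}
    (h : (subdividedCompleteBipartite n k).Adj x y) :
    ∃ a b j, j < k ∧ ((x = pv n k a b j ∧ y = pv n k a b (j + 1)) ∨
      (y = pv n k a b j ∧ x = pv n k a b (j + 1))) := by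
  rw [subdividedCompleteBipartite, SimpleGraph.fromRel_adj] at h
  obtain ⟨-, hrel | hrel⟩ := h
  · exact rel_char hk hrel
  · obtain ⟨a, b, j, hj, hc⟩ := rel_char hk hrel
    exact ⟨a, b, j, hj, hc.symm⟩


instance subdivFinite (n k : ℕ) : Finite (SubdivVertex n k) := by
  unfold SubdivVertex; infer_instance

lemma pe_inj {n k : ℕ} {a b a' b' : Fin n} {j j' : ℕ} (hk : 1 ≤ k)
    (hj : j < k) (hj' : j' < k) (h : pe n k a b j = pe n k a' b' j') :
    a = a' ∧ b = b' ∧ j = j' := by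
  rw [pe, pe, Sym2.eq_iff] at h
  rcases h with ⟨h1, h2⟩ | ⟨h1, h2⟩
  · obtain ⟨e1, d1⟩ := pv_inj hk (by omega) (by omega) h1
    obtain ⟨e2, d2⟩ := pv_inj hk (by omega) (by omega) h2
    rcases d1 with ⟨hz, ha⟩ | ⟨hk', hb⟩ | ⟨ha, hb⟩
    · rcases d2 with ⟨h0, -⟩ | ⟨-, hb⟩ | ⟨-, hb⟩
      · omega
      · exact ⟨ha, hb, e1⟩
      · exact ⟨ha, hb, e1⟩
    · omega
    · exact ⟨ha, hb, e1⟩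
  · obtain ⟨e1, -⟩ := pv_inj hk (by omega) (by omega) h1
    obtain ⟨e2, -⟩ := pv_inj hk (by omega) (by omega) h2
    omega

lemma edge_char {n k : ℕ} (hk : 1 ≤ k) {s : Sym2 (SubdivVertex n k)}
    (hs : s ∈ (subdividedCompleteBipartite n k).edgeSet) :
    ∃ a b j, j < k ∧ s = pe n k a b j := by
  induction s using Sym2.ind with
  | _ x y =>
    rw [SimpleGraph.mem_edgeSet] at hs
    obtain ⟨a, b, j, hj, ⟨hx, hy⟩ | ⟨hy, hx⟩⟩ := adj_char hk hs
    · exact ⟨a, b, j, hj, by rw [hx, hy]; rfl⟩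
    · exact ⟨a, b, j, hj, by rw [hx, hy, pe, Sym2.eq_swap]⟩

open SimpleGraph in
lemma alt {n k : ℕ} (hk : 1 ≤ k) {M : (subdividedCompleteBipartite n k).Subgraph}
    (hM : M.IsPerfectMatching) (a b : Fin n) {t : ℕ} (ht1 : 1 ≤ t) (ht : t < k) :
    (pe n k a b (t - 1) ∈ M.edgeSet ↔ ¬ pe n k a b t ∈ M.edgeSet) := by
  obtain ⟨y, hy, hyu⟩ := hM.1 (hM.2 (pv n k a b t))
  have hnb : ∀ z, M.Adj (pv n k a b t) z →
      z = pv n k a b (t - 1) ∨ z = pv n k a b (t + 1) := by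
    intro z hz
    obtain ⟨a', b', j, hj, hc | hc⟩ := adj_char hk (M.adj_sub hz)
    · obtain ⟨hjj, hd⟩ := pv_inj hk (by omega) (by omega) hc.1
      rcases hd with ⟨h0, -⟩ | ⟨h0, -⟩ | ⟨ha, hb⟩
      · omega
      · omega
      · subst ha; subst hb; right; rw [hc.2, hjj]
    · obtain ⟨hjj, hd⟩ := pv_inj hk (by omega) (by omega) hc.2
      rcases hd with ⟨h0, -⟩ | ⟨h0, -⟩ | ⟨ha, hb⟩
      · omega
      · omega
      · subst ha; subst hb; left; rw [hc.1]; congr 1; omega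
  have m1 : pe n k a b (t - 1) ∈ M.edgeSet ↔
      M.Adj (pv n k a b t) (pv n k a b (t - 1)) := by
    rw [pe, show t - 1 + 1 = t by omega, Subgraph.mem_edgeSet, Subgraph.adj_comm]
  have m2 : pe n k a b t ∈ M.edgeSet ↔ M.Adj (pv n k a b t) (pv n k a b (t + 1)) := by
    rw [pe, Subgraph.mem_edgeSet]
  have hne : pv n k a b (t - 1) ≠ pv n k a b (t + 1) :=
    pv_ne hk (by omega) (by omega) (by omega)
  rcases hnb y hy with rfl | rfl
  · rw [m1, m2]
    exact iff_of_true hy fun h2 => hne (hyu _ h2).symm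
  · rw [m1, m2]
    exact iff_of_false (fun h1 => hne (hyu _ h1)) (not_not_intro hy)

open SimpleGraph in
lemma parity {n k : ℕ} (hk : 1 ≤ k) {M : (subdividedCompleteBipartite n k).Subgraph}
    (hM : M.IsPerfectMatching) (a b : Fin n) :
    ∀ j, j < k → (pe n k a b j ∈ M.edgeSet ↔ (Even j ↔ pe n k a b 0 ∈ M.edgeSet)) := by
  intro j
  induction j with
  | zero => intro _; simp
  | succ m ih =>
    intro hm
    have h1 := alt hk hM a b (t := m + 1) (by omega) hm
    simp only [Nat.add_sub_cancel] at h1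
    have h2 := ih (by omega)
    rw [Nat.even_add_one]
    tauto

open SimpleGraph in
lemma pe0_mem {n k : ℕ} {M : (subdividedCompleteBipartite n k).Subgraph} (a b : Fin n) :
    pe n k a b 0 ∈ M.edgeSet ↔ M.Adj (.inl (.inl a)) (pv n k a b 1) := by
  rw [pe, pv_zero, show (0 + 1 : ℕ) = 1 from rfl]; exact Subgraph.mem_edgeSet

open SimpleGraph in
lemma unique_b {n k : ℕ} (hk : 1 ≤ k) {M : (subdividedCompleteBipartite n k).Subgraph}
    (hM : M.IsPerfectMatching) (a : Fin n) : ∃! b, pe n k a b 0 ∈ M.edgeSet := by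
  obtain ⟨y, hy, hyu⟩ := hM.1 (hM.2 (Sum.inl (Sum.inl a)))
  have key : ∀ z, M.Adj (Sum.inl (Sum.inl a)) z → ∃ b, z = pv n k a b 1 := by
    intro z hz
    obtain ⟨a', b', j, hj, hc | hc⟩ := adj_char hk (M.adj_sub hz)
    · have h1 : pv n k a a 0 = pv n k a' b' j := by rw [pv_zero]; exact hc.1
      obtain ⟨hjj, hd⟩ := pv_inj hk (by omega) (by omega) h1
      have hj0 : j = 0 := by omega
      have ha : a = a' := by
        rcases hd with ⟨-, ha⟩ | ⟨h0, -⟩ | ⟨ha, -⟩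
        · exact ha
        · omega
        · exact ha
      subst ha; subst hj0
      exact ⟨b', by rw [hc.2]⟩
    · have h1 : pv n k a a 0 = pv n k a' b' (j + 1) := by rw [pv_zero]; exact hc.2
      have := (pv_inj hk (by omega) (by omega) h1).1
      omega
  obtain ⟨b0, hb0⟩ := key y hy
  refine ⟨b0, ?_, ?_⟩
  · show pe n k a b0 0 ∈ M.edgeSet
    rw [pe0_mem, ← hb0]; exact hy
  · intro b' hb'
    have hadj : M.Adj (.inl (.inl a)) (pv n k a b' 1) := (pe0_mem a b').mp hb'
    have e := hyu _ hadj
    rw [hb0] at e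
    obtain ⟨-, hd⟩ := pv_inj hk (by omega) (by omega) e
    rcases hd with ⟨h0, -⟩ | ⟨-, hb⟩ | ⟨-, hb⟩
    · omega
    · exact hb
    · exact hb

open SimpleGraph in
lemma pelast_mem {n k : ℕ} (hk : 1 ≤ k) {M : (subdividedCompleteBipartite n k).Subgraph}
    (a b : Fin n) :
    pe n k a b (k - 1) ∈ M.edgeSet ↔ M.Adj (.inl (.inr b)) (pv n k a b (k - 1)) := by
  rw [pe, show k - 1 + 1 = k by omega, pv_last n k a b hk]; exact Subgraph.mem_edgeSet.trans
    (M.adj_comm _ _)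

open SimpleGraph in
lemma unique_a {n k : ℕ} (hk : 1 ≤ k) {M : (subdividedCompleteBipartite n k).Subgraph}
    (hM : M.IsPerfectMatching) (b : Fin n) : ∃! a, pe n k a b (k - 1) ∈ M.edgeSet := by
  obtain ⟨y, hy, hyu⟩ := hM.1 (hM.2 (Sum.inl (Sum.inr b)))
  have key : ∀ z, M.Adj (Sum.inl (Sum.inr b)) z → ∃ a, z = pv n k a b (k - 1) := by
    intro z hz
    obtain ⟨a', b', j, hj, hc | hc⟩ := adj_char hk (M.adj_sub hz)
    · have h1 : pv n k a' b k = pv n k a' b' j := by rw [pv_last n k a' b hk]; exact hc.1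
      have := (pv_inj hk (by omega) (by omega) h1).1
      omega
    · have h1 : pv n k a' b k = pv n k a' b' (j + 1) := by
        rw [pv_last n k a' b hk]; exact hc.2
      obtain ⟨hjj, hd⟩ := pv_inj hk (by omega) (by omega) h1
      have hb : b = b' := by
        rcases hd with ⟨h0, -⟩ | ⟨-, hb⟩ | ⟨-, hb⟩
        · omega
        · exact hb
        · exact hb
      subst hb
      have hjval : j = k - 1 := by omega
      subst hjval
      exact ⟨a', hc.1⟩
  obtain ⟨a0, ha0⟩ := key y hy
  refine ⟨a0, ?_, ?_⟩
  · show pe n k a0 b (k - 1) ∈ M.edgeSet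
    rw [pelast_mem hk, ← ha0]; exact hy
  · intro a' ha'
    have hadj : M.Adj (.inl (.inr b)) (pv n k a' b (k - 1)) := (pelast_mem hk a' b).mp ha'
    have e := hyu _ hadj
    rw [ha0] at e
    obtain ⟨-, hd⟩ := pv_inj hk (by omega) (by omega) e
    rcases hd with ⟨-, ha⟩ | ⟨h0, -⟩ | ⟨ha, -⟩
    · exact ha
    · omega
    · exact ha

open SimpleGraph in
lemma unique_a_state {n k : ℕ} (hodd : Odd k) (hk : 1 ≤ k)
    {M : (subdividedCompleteBipartite n k).Subgraph}
    (hM : M.IsPerfectMatching) (b : Fin n) : ∃! a, pe n k a b 0 ∈ M.edgeSet := by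
  have heven : Even (k - 1) := Nat.Odd.sub_odd hodd odd_one
  have hiff : ∀ a : Fin n, (pe n k a b (k - 1) ∈ M.edgeSet ↔ pe n k a b 0 ∈ M.edgeSet) := by
    intro a
    rw [parity hk hM a b (k - 1) (by omega)]
    exact iff_of_eq (congrArg _ rfl) |>.trans ⟨fun h => h.mp heven, fun h => ⟨fun _ => h, fun _ => heven⟩⟩
  obtain ⟨a0, ha0, hau⟩ := unique_a hk hM b
  exact ⟨a0, (hiff a0).mp ((parity hk hM a0 b (k - 1) (by omega)).mpr
      ((parity hk hM a0 b (k - 1) (by omega)).mp ha0)) , fun a' ha' => hau a' ((hiff a').mpr ha')⟩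

open SimpleGraph in
lemma det {n k : ℕ} (hk : 1 ≤ k) {M N : (subdividedCompleteBipartite n k).Subgraph}
    (hM : M.IsPerfectMatching) (hN : N.IsPerfectMatching)
    (h : ∀ a b, (pe n k a b 0 ∈ M.edgeSet ↔ pe n k a b 0 ∈ N.edgeSet)) : M = N := by
  have he : M.edgeSet = N.edgeSet := by
    ext s
    constructor <;> intro hs
    · obtain ⟨a, b, j, hj, rfl⟩ := edge_char hk (M.edgeSet_subset hs)
      have hm := (parity hk hM a b j hj).mp hs
      rw [h a b] at hm
      exact (parity hk hN a b j hj).mpr hm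
    · obtain ⟨a, b, j, hj, rfl⟩ := edge_char hk (N.edgeSet_subset hs)
      have hm := (parity hk hN a b j hj).mp hs
      rw [← h a b] at hm
      exact (parity hk hM a b j hj).mpr hm
  ext x y
  · simp [hM.2 x, hN.2 x]
  · rw [← Subgraph.mem_edgeSet, ← Subgraph.mem_edgeSet, he]


open SimpleGraph in
lemma main_aux {n k : ℕ} (hodd : Odd k) (hk : 1 ≤ k)
    (M N : (subdividedCompleteBipartite n k).Subgraph)
    (hM : M.IsPerfectMatching) (hN : N.IsPerfectMatching) (a b : Fin n)
    (h1 : pe n k a b 0 ∈ M.edgeSet) (h2 : pe n k a b 0 ∉ N.edgeSet) :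
    4 * k ≤ (symmDiff M.edgeSet N.edgeSet).ncard := by
  classical
  obtain ⟨bM, hbM, hbMu⟩ := unique_b hk hM a
  obtain ⟨bN, hbN, hbNu⟩ := unique_b hk hN a
  obtain ⟨aM, haM, haMu⟩ := unique_a_state hodd hk hM b
  obtain ⟨aN, haN, haNu⟩ := unique_a_state hodd hk hN b
  have hbMb : bM = b := (hbMu b h1).symm
  have haMa : aM = a := (haMu a h1).symm
  replace hbMu : ∀ y, pe n k a y 0 ∈ M.edgeSet → y = b :=
    fun y hy => (hbMu y hy).trans hbMb
  replace haMu : ∀ y, pe n k y b 0 ∈ M.edgeSet → y = a :=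
    fun y hy => (haMu y hy).trans haMa
  have hbNb : bN ≠ b := fun h => h2 (h ▸ hbN)
  have haNa : aN ≠ a := fun h => h2 (h ▸ haN)
  have hMabN : pe n k a bN 0 ∉ M.edgeSet := fun h => hbNb (hbMu bN h)
  have hMaNb : pe n k aN b 0 ∉ M.edgeSet := fun h => haNa (haMu aN h)
  obtain ⟨bM', hbM', hbM'u⟩ := unique_b hk hM aN
  obtain ⟨bN', hbN', hbN'u⟩ := unique_b hk hN aN
  have hbN'b : bN' = b := (hbN'u b haN).symm
  replace hbN'u : ∀ y, pe n k aN y 0 ∈ N.edgeSet → y = b :=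
    fun y hy => (hbN'u y hy).trans hbN'b
  have hbM'b : bM' ≠ b := fun h => hMaNb (h ▸ hbM')
  have hNaNbM' : pe n k aN bM' 0 ∉ N.edgeSet := fun h => hbM'b (hbN'u bM' h)
  -- the four pairs
  let p : Fin 4 → Fin n × Fin n := fun i =>
    match i with
    | 0 => (a, b)
    | 1 => (a, bN)
    | 2 => (aN, b)
    | 3 => (aN, bM')
  have hpinj : Function.Injective p := by
    intro i i' h
    fin_cases i <;> fin_cases i' <;>
      first
        | rfl
        | (exact absurd (congrArg Prod.fst h) haNa)
        | (exact absurd (congrArg Prod.fst h) (Ne.symm haNa))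
        | (exact absurd (congrArg Prod.snd h) hbNb)
        | (exact absurd (congrArg Prod.snd h) (Ne.symm hbNb))
        | (exact absurd (congrArg Prod.snd h) hbM'b)
        | (exact absurd (congrArg Prod.snd h) (Ne.symm hbM'b))
  have hdiff : ∀ i : Fin 4,
      ¬(pe n k (p i).1 (p i).2 0 ∈ M.edgeSet ↔ pe n k (p i).1 (p i).2 0 ∈ N.edgeSet) := by
    intro i
    fin_cases i
    · exact fun hiff => h2 (hiff.mp h1)
    · exact fun hiff => hMabN (hiff.mpr hbN)
    · exact fun hiff => hMaNb (hiff.mpr haN)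
    · exact fun hiff => hNaNbM' (hiff.mp hbM')
  let g : Fin 4 × Fin k → Sym2 (SubdivVertex n k) :=
    fun q => pe n k (p q.1).1 (p q.1).2 (q.2 : ℕ)
  have hginj : Function.Injective g := by
    rintro ⟨i, j⟩ ⟨i', j'⟩ hgq
    obtain ⟨ea, eb, ej⟩ := pe_inj hk j.2 j'.2 hgq
    have hpp : p i = p i' := Prod.ext ea eb
    exact Prod.ext (hpinj hpp) (Fin.ext ej)
  have hmem : ∀ q : Fin 4 × Fin k, g q ∈ symmDiff M.edgeSet N.edgeSet := by
    rintro ⟨i, j⟩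
    have hMj := parity hk hM (p i).1 (p i).2 (j : ℕ) j.2
    have hNj := parity hk hN (p i).1 (p i).2 (j : ℕ) j.2
    have hd := hdiff i
    show pe n k (p i).1 (p i).2 (j : ℕ) ∈ symmDiff M.edgeSet N.edgeSet
    rw [Set.mem_symmDiff]
    rcases Classical.em (pe n k (p i).1 (p i).2 0 ∈ M.edgeSet) with hsM | hsM <;>
      rcases Classical.em (pe n k (p i).1 (p i).2 0 ∈ N.edgeSet) with hsN | hsN
    · exact absurd ⟨fun _ => hsN, fun _ => hsM⟩ hd
    · rcases Classical.em (Even (j : ℕ)) with hE | hE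
      · exact Or.inl ⟨hMj.mpr (iff_of_true hE hsM), fun hin => hsN ((hNj.mp hin).mp hE)⟩
      · exact Or.inr ⟨hNj.mpr (iff_of_false hE hsN), fun hin => hE ((hMj.mp hin).mpr hsM)⟩
    · rcases Classical.em (Even (j : ℕ)) with hE | hE
      · exact Or.inr ⟨hNj.mpr (iff_of_true hE hsN), fun hin => hsM ((hMj.mp hin).mp hE)⟩
      · exact Or.inl ⟨hMj.mpr (iff_of_false hE hsM), fun hin => hE ((hNj.mp hin).mpr hsN)⟩
    · exact absurd ⟨fun h => (hsM h).elim, fun h => (hsN h).elim⟩ hd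
  classical
  have hFcard : (Finset.image g Finset.univ).card = 4 * k := by
    rw [Finset.card_image_of_injective _ hginj, Finset.card_univ]
    simp
  have hfin : (symmDiff M.edgeSet N.edgeSet).Finite := Set.toFinite _
  have hsub : ↑(Finset.image g Finset.univ) ⊆ symmDiff M.edgeSet N.edgeSet := by
    intro s hsF
    simp only [Finset.coe_image, Finset.coe_univ, Set.image_univ, Set.mem_range] at hsF
    obtain ⟨q, rfl⟩ := hsF
    exact hmem q
  calc 4 * k = (Finset.image g Finset.univ).card := hFcard.symm
    _ = (↑(Finset.image g Finset.univ) : Set (Sym2 (SubdivVertex n k))).ncard :=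
        (Set.ncard_coe_finset _).symm
    _ ≤ (symmDiff M.edgeSet N.edgeSet).ncard := Set.ncard_le_ncard hsub hfin

end Subdiv

/-- Any two distinct perfect matchings of `H_{n,k}` (`k` odd, `k ≥ 1`) differ in at least
`4 * k` edges: their symmetric difference has cardinality at least `4 * k`. -/
theorem subdivided_complete_bipartite_matchings_far_apart (n k : ℕ) (hk : Odd k)
    (hk1 : 1 ≤ k)
    (M N : (subdividedCompleteBipartite n k).Subgraph)
    (hM : M.IsPerfectMatching) (hN : N.IsPerfectMatching) (hMN : M ≠ N) :
    4 * k ≤ (symmDiff M.edgeSet N.edgeSet).ncard := by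
  have hstate : ¬ ∀ a b, (Subdiv.pe n k a b 0 ∈ M.edgeSet ↔ Subdiv.pe n k a b 0 ∈ N.edgeSet) :=
    fun h => hMN (Subdiv.det hk1 hM hN h)
  push_neg at hstate
  obtain ⟨a, b, hab⟩ := hstate
  rcases hab with ⟨hm, hn⟩ | ⟨hm, hn⟩
  · exact Subdiv.main_aux hk hk1 M N hM hN a b hm hn
  · rw [symmDiff_comm]
    exact Subdiv.main_aux hk hk1 N M hN hM a b hn hm
end

section
/- Let G be a bipartite graph containing a vertex u of degree 2 with neighbors v and w, and let G' be the graph obtained by deleting u and contracting v and w into a single new vertex z (keeping parallel edges). Then G and G' have the same number of perfect matchings. -/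
open SimpleGraph Set

/-- Let `G` be a bipartite graph with a vertex `u` of degree 2 with neighbors `v` and `w`,
and let `G'` be the (multi)graph obtained by deleting `u` and contracting `v` and `w`
into a single new vertex `z`, keeping parallel edges.  Then `G` and `G'` have the same
number of perfect matchings.

Since parallel edges of `G'` are kept, its edges (with multiplicity) correspond exactly
to the edges of `G` not incident to `u`; a perfect matching of `G'` is then a set `S` of
such edges of `G` covering every vertex other than `u`, `v`, `w` exactly once and
containing exactly one edge meeting `{v, w}`. -/
theorem trim_degree_two_vertex_preserves_matching_count
    {V : Type*} [Fintype V] (G : SimpleGraph V) (hbip : G.Colorable 2)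
    (hex : ∃ M : G.Subgraph, M.IsPerfectMatching)
    (u v w : V) (hvw : v ≠ w) (hnbr : G.neighborSet u = {v, w}) :
    {M : G.Subgraph | M.IsPerfectMatching}.ncard =
      {S : Set (Sym2 V) | S ⊆ G.edgeSet ∧ (∀ e ∈ S, u ∉ e) ∧
        (∀ x : V, x ≠ u → x ≠ v → x ≠ w → ∃! e, e ∈ S ∧ x ∈ e) ∧
        (∃! e, e ∈ S ∧ (v ∈ e ∨ w ∈ e))}.ncard := by
  classical
  have hadjv : G.Adj u v := by
    have : v ∈ G.neighborSet u := by rw [hnbr]; left; rfl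
    exact this
  have hadjw : G.Adj u w := by
    have : w ∈ G.neighborSet u := by rw [hnbr]; right; rfl
    exact this
  have huv : u ≠ v := G.ne_of_adj hadjv
  have huw : u ≠ w := G.ne_of_adj hadjw
  have hnadj : ¬ G.Adj v w := by
    intro h
    obtain ⟨c⟩ := hbip
    have h1 := c.valid hadjv
    have h2 := c.valid hadjw
    have h3 := c.valid h
    have key : ∀ a b c : Fin 2, a ≠ b → a ≠ c → b ≠ c → False := by decide
    exact key _ _ _ h1 h2 h3
  have hmemu : ∀ x, G.Adj u x → x = v ∨ x = w := by
    intro x hx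
    have : x ∈ G.neighborSet u := hx
    rw [hnbr] at this
    exact this
  set f : G.Subgraph → Set (Sym2 V) := fun M => {e | e ∈ M.edgeSet ∧ u ∉ e} with hf
  -- symmetric helper for injectivity
  have key : ∀ p q : V, p ≠ q → q ≠ u → (∀ x, G.Adj u x → x = p ∨ x = q) →
      ∀ M1 M2 : G.Subgraph, M1.IsPerfectMatching → M2.IsPerfectMatching →
      f M1 = f M2 → M1.Adj u p → M2.Adj u p := by
    intro p q hpq hqu hmem M1 M2 h1 h2 heq hup
    have pm1 := Subgraph.isPerfectMatching_iff.mp h1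
    have pm2 := Subgraph.isPerfectMatching_iff.mp h2
    obtain ⟨y, hy, hyu⟩ := pm2 u
    rcases hmem y (M2.adj_sub hy) with h | h
    · rwa [h] at hy
    · -- M2.Adj u q; derive a contradiction
      exfalso
      rw [h] at hy
      obtain ⟨b, hb, hbu⟩ := pm1 q
      have hbne : b ≠ u := by
        intro h
        rw [h] at hb
        have := (pm1 u).unique hb.symm hup
        exact hpq this.symm
      have hmem1 : s(q, b) ∈ f M1 := by
        refine ⟨Subgraph.mem_edgeSet.mpr hb, ?_⟩
        rw [Sym2.mem_iff]; push_neg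
        exact ⟨fun h => hqu h.symm, fun h => hbne h.symm⟩
      rw [heq] at hmem1
      have hadj : M2.Adj q b := Subgraph.mem_edgeSet.mp hmem1.1
      have := (pm2 q).unique hadj hy.symm
      exact hbne this
  have hinj : Set.InjOn f {M | M.IsPerfectMatching} := by
    intro M1 h1 M2 h2 heq
    have h1' : M1.IsPerfectMatching := h1
    have h2' : M2.IsPerfectMatching := h2
    have hAdj : ∀ a b, M1.Adj a b ↔ M2.Adj a b := by
      have main : ∀ N1 N2 : G.Subgraph, N1.IsPerfectMatching → N2.IsPerfectMatching →
          f N1 = f N2 → ∀ a b, N1.Adj a b → N2.Adj a b := by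
        intro N1 N2 g1 g2 geq a b hab
        by_cases hcase : u = a ∨ u = b
        · have main2 : ∀ x, N1.Adj u x → N2.Adj u x := by
            intro x hx
            rcases hmemu x (N1.adj_sub hx) with h | h
            · rw [h] at hx ⊢; exact key v w hvw huw.symm hmemu N1 N2 g1 g2 geq hx
            · rw [h] at hx ⊢
              exact key w v hvw.symm huv.symm (fun x hx => (hmemu x hx).symm)
                N1 N2 g1 g2 geq hx
          rcases hcase with rfl | rfl
          · exact main2 b hab
          · exact (main2 a hab.symm).symm
        · push_neg at hcase
          have hm : s(a, b) ∈ f N1 := by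
            refine ⟨Subgraph.mem_edgeSet.mpr hab, ?_⟩
            rw [Sym2.mem_iff]; push_neg; exact hcase
          rw [geq] at hm
          exact Subgraph.mem_edgeSet.mp hm.1
      exact fun a b => ⟨main M1 M2 h1' h2' heq a b, main M2 M1 h2' h1' heq.symm a b⟩
    ext1
    · rw [h1'.2.verts_eq_univ, h2'.2.verts_eq_univ]
    · ext a b; exact hAdj a b
  have himg : f '' {M | M.IsPerfectMatching} =
      {S : Set (Sym2 V) | S ⊆ G.edgeSet ∧ (∀ e ∈ S, u ∉ e) ∧
        (∀ x : V, x ≠ u → x ≠ v → x ≠ w → ∃! e, e ∈ S ∧ x ∈ e) ∧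
        (∃! e, e ∈ S ∧ (v ∈ e ∨ w ∈ e))} := by
    apply Set.Subset.antisymm
    · rintro S ⟨M, hM, rfl⟩
      have hM' : M.IsPerfectMatching := hM
      have pm := Subgraph.isPerfectMatching_iff.mp hM'
      refine ⟨?_, ?_, ?_, ?_⟩
      · intro e he
        exact M.edgeSet_subset he.1
      · intro e he; exact he.2
      · intro x hxu hxv hxw
        obtain ⟨b, hb, hbu⟩ := pm x
        have hbne : b ≠ u := by
          intro h; subst h
          rcases hmemu x (M.adj_sub hb).symm with h | h
          · exact hxv h
          · exact hxw h
        refine ⟨s(x, b), ⟨⟨Subgraph.mem_edgeSet.mpr hb, ?_⟩, Sym2.mem_mk_left _ _⟩, ?_⟩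
        · rw [Sym2.mem_iff]; push_neg
          exact ⟨fun h => hxu h.symm, fun h => hbne h.symm⟩
        · rintro e ⟨⟨he, hue⟩, hxe⟩
          obtain ⟨c, rfl⟩ := Sym2.mem_iff_exists.mp hxe
          have hxc : M.Adj x c := Subgraph.mem_edgeSet.mp he
          rw [hbu c hxc]
      · -- the unique edge meeting {v, w}
        obtain ⟨y, hy, hyu⟩ := pm u
        have main : ∀ p q : V, p ≠ q → q ≠ u → M.Adj u p →
            ∃! e, (e ∈ M.edgeSet ∧ u ∉ e) ∧ (p ∈ e ∨ q ∈ e) := by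
          intro p q hpq hqu hup
          obtain ⟨b, hb, hbu⟩ := pm q
          have hbne : b ≠ u := by
            intro h
            rw [h] at hb
            have := (pm u).unique hb.symm hup
            exact hpq this.symm
          refine ⟨s(q, b), ⟨⟨Subgraph.mem_edgeSet.mpr hb, ?_⟩,
            Or.inr (Sym2.mem_mk_left _ _)⟩, ?_⟩
          · rw [Sym2.mem_iff]; push_neg
            exact ⟨fun h => hqu h.symm, fun h => hbne h.symm⟩
          · rintro e ⟨⟨he, hue⟩, hpe | hqe⟩
            · exfalso
              obtain ⟨c, rfl⟩ := Sym2.mem_iff_exists.mp hpe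
              have hpc : M.Adj p c := Subgraph.mem_edgeSet.mp he
              have hcu : c = u := (pm p).unique hpc hup.symm
              exact hue (by rw [Sym2.mem_iff]; right; exact hcu.symm)
            · obtain ⟨c, rfl⟩ := Sym2.mem_iff_exists.mp hqe
              have hqc : M.Adj q c := Subgraph.mem_edgeSet.mp he
              rw [hbu c hqc]
        rcases hmemu y (M.adj_sub hy) with h | h
        all_goals rw [h] at hy
        · obtain ⟨e, he1, he2⟩ := main v w hvw huw.symm hy
          exact ⟨e, ⟨he1.1, he1.2⟩, fun e' he' => he2 e' ⟨he'.1, he'.2⟩⟩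
        · obtain ⟨e, he1, he2⟩ := main w v hvw.symm huv.symm hy
          exact ⟨e, ⟨he1.1, he1.2.symm⟩, fun e' he' => he2 e' ⟨he'.1, he'.2.symm⟩⟩
    · rintro S ⟨hS1, hS2, hS3, e0, ⟨he0S, he0m⟩, he0u⟩
      have hnvw : ¬ (v ∈ e0 ∧ w ∈ e0) := by
        rintro ⟨h1, h2⟩
        have he := (Sym2.mem_and_mem_iff hvw).mp ⟨h1, h2⟩
        subst he
        exact hnadj (G.mem_edgeSet.mp (hS1 he0S))
      -- helper: p is the endpoint of e0 in {v,w}, u gets matched to q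
      have main : ∀ p q : V, p ≠ q → G.Adj u q → p ∈ e0 → q ∉ e0 →
          (∀ e ∈ S, (p ∈ e ∨ q ∈ e) → e = e0) →
          (∀ x, x ≠ u → x ≠ p → x ≠ q → ∃! e, e ∈ S ∧ x ∈ e) →
          ∃ M : G.Subgraph, M.IsPerfectMatching ∧ f M = S := by
        intro p q hpq hadjq hpe0 hqe0 huniq hS3'
        have hqu : q ≠ u := (G.ne_of_adj hadjq).symm
        have hpu : p ≠ u := fun h => hS2 e0 he0S (h ▸ hpe0)
        refine ⟨⟨Set.univ, fun a b => s(a, b) ∈ S ∨ s(a, b) = s(u, q), ?_,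
          fun _ => trivial, ?_⟩, ?_, ?_⟩
        · intro a b h
          rw [← SimpleGraph.mem_edgeSet]
          rcases h with h | h
          · exact hS1 h
          · rw [h]; exact hadjq
        · constructor; intro a b h
          rwa [Sym2.eq_swap] at h
        · rw [Subgraph.isPerfectMatching_iff]
          intro x
          by_cases hxu : x = u
          · subst hxu
            refine ⟨q, Or.inr rfl, ?_⟩
            rintro y (hy | hy)
            · exact absurd (Sym2.mem_mk_left _ _) (hS2 _ hy)
            · rcases Sym2.eq_iff.mp hy with ⟨_, rfl⟩ | ⟨h1, _⟩
              · rfl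
              · exact absurd h1.symm hqu
          · by_cases hxp : x = p
            · subst hxp
              obtain ⟨b, rfl⟩ := Sym2.mem_iff_exists.mp hpe0
              refine ⟨b, Or.inl he0S, ?_⟩
              rintro y (hy | hy)
              · have heq := huniq _ hy (Or.inl (Sym2.mem_mk_left _ _))
                rcases Sym2.eq_iff.mp heq with ⟨_, rfl⟩ | ⟨h1, h2⟩
                · rfl
                · rw [h2]; exact h1
              · exfalso
                rcases Sym2.eq_iff.mp hy with ⟨h1, _⟩ | ⟨h1, _⟩
                · exact hpu h1
                · exact hpq h1
            · by_cases hxq : x = q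
              · subst hxq
                refine ⟨u, Or.inr Sym2.eq_swap, ?_⟩
                rintro y (hy | hy)
                · exfalso
                  have heq := huniq _ hy (Or.inr (Sym2.mem_mk_left _ _))
                  exact hqe0 (heq ▸ Sym2.mem_mk_left _ _)
                · rcases Sym2.eq_iff.mp hy with ⟨h1, _⟩ | ⟨_, h2⟩
                  · exact absurd h1 hqu
                  · exact h2
              · obtain ⟨e, ⟨heS, hxe⟩, hequ⟩ := hS3' x hxu hxp hxq
                obtain ⟨b, rfl⟩ := Sym2.mem_iff_exists.mp hxe
                refine ⟨b, Or.inl heS, ?_⟩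
                rintro y (hy | hy)
                · have heq := hequ _ ⟨hy, Sym2.mem_mk_left _ _⟩
                  rcases Sym2.eq_iff.mp heq with ⟨_, rfl⟩ | ⟨h1, h2⟩
                  · rfl
                  · rw [h2]; exact h1
                · exfalso
                  rcases Sym2.eq_iff.mp hy with ⟨h1, _⟩ | ⟨h1, _⟩
                  · exact hxu h1
                  · exact hxq h1
        · ext e
          induction e using Sym2.ind with
          | _ a b =>
            constructor
            · rintro ⟨he, hue⟩
              rw [Subgraph.mem_edgeSet] at he
              rcases he with h | h
              · exact h
              · exfalso
                rw [h] at hue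
                exact hue (Sym2.mem_mk_left _ _)
            · intro hSe
              exact ⟨Subgraph.mem_edgeSet.mpr (Or.inl hSe), hS2 _ hSe⟩
      rcases he0m with hv0 | hw0
      · have hw0 : w ∉ e0 := fun h => hnvw ⟨hv0, h⟩
        obtain ⟨M, hM, hfM⟩ := main v w hvw hadjw hv0 hw0
          (fun e he hm => he0u e ⟨he, hm⟩) hS3
        exact ⟨M, hM, hfM⟩
      · have hv0 : v ∉ e0 := fun h => hnvw ⟨h, hw0⟩
        obtain ⟨M, hM, hfM⟩ := main w v hvw.symm hadjv hw0 hv0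
          (fun e he hm => he0u e ⟨he, hm.symm⟩)
          (fun x h1 h2 h3 => hS3 x h1 h3 h2)
        exact ⟨M, hM, hfM⟩
  rw [← himg, Set.ncard_image_of_injOn hinj]
end

section
/- For every n with n + 2 divisible by 4 and every m with n ≤ m ≤ n²/16 + 5n/4 − 7/4, there exists a strongly connected bipartite graph G with n vertices and m edges having exactly m − n + 2 perfect matchings. -/
/-- The orientation `D(G, M)`: matching edges oriented from the class `col = false` to
the class `col = true`, and non-matching edges in the opposite direction. -/
def dirAdj {V : Type*} (G : SimpleGraph V) (M : G.Subgraph) (col : V → Bool)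
    (x y : V) : Prop :=
  G.Adj x y ∧ (s(x, y) ∈ M.edgeSet ↔ col x = false)

open SimpleGraph
namespace SCG

def cycAdjN (n x y : ℕ) : Prop :=
  y = x + 1 ∨ x = y + 1 ∨ (x = 0 ∧ y = n - 1) ∨ (y = 0 ∧ x = n - 1)

def gAdj (n : ℕ) (S : Finset (ℕ × ℕ)) (u v : Fin n) : Prop :=
  u ≠ v ∧ (cycAdjN n u.val v.val ∨ (u.val, v.val) ∈ S ∨ (v.val, u.val) ∈ S)

def GG (n : ℕ) (S : Finset (ℕ × ℕ)) : SimpleGraph (Fin n) where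
  Adj := gAdj n S
  symm := by
    constructor
    rintro u v ⟨h1, h2⟩
    refine ⟨fun h => h1 h.symm, ?_⟩
    unfold cycAdjN at h2 ⊢
    tauto
  loopless := ⟨fun x h => h.1 rfl⟩

lemma GG_adj {n : ℕ} {S : Finset (ℕ × ℕ)} {u v : Fin n} :
    (GG n S).Adj u v ↔ (u ≠ v ∧ (cycAdjN n u.val v.val ∨ (u.val, v.val) ∈ S ∨ (v.val, u.val) ∈ S)) :=
  Iff.rfl

def msub {V : Type*} (G : SimpleGraph V) (f : V → V) : G.Subgraph where
  verts := Set.univ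
  Adj x y := f x = y ∧ f y = x ∧ G.Adj x y
  adj_sub h := h.2.2
  edge_vert _ := trivial
  symm := by constructor; rintro x y ⟨h1, h2, h3⟩; exact ⟨h2, h1, h3.symm⟩

lemma msub_isPM {V : Type*} {G : SimpleGraph V} {f : V → V}
    (hadj : ∀ v, G.Adj v (f v)) (hinv : ∀ v, f (f v) = v) :
    (msub G f).IsPerfectMatching := by
  rw [Subgraph.isPerfectMatching_iff]
  intro v
  exact ⟨f v, ⟨rfl, hinv v, hadj v⟩, fun w h => h.1.symm⟩

lemma msub_adj {V : Type*} {G : SimpleGraph V} {f : V → V} {x y : V} :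
    (msub G f).Adj x y ↔ (f x = y ∧ f y = x ∧ G.Adj x y) := Iff.rfl

lemma msub_eq_of_partner {V : Type*} {G : SimpleGraph V} {f g : V → V}
    (hadj : ∀ v, G.Adj v (f v)) (hinv : ∀ v, f (f v) = v)
    (h : msub G f = msub G g) (v : V) : g v = f v := by
  have h1 : (msub G f).Adj v (f v) := ⟨rfl, hinv v, hadj v⟩
  rw [h] at h1
  exact h1.1

def liftF (n : ℕ) (g : ℕ → ℕ) : Fin n → Fin n := fun x =>
  if h : g x.val < n then ⟨g x.val, h⟩ else x

lemma liftF_val {n : ℕ} {g : ℕ → ℕ} {x : Fin n} (h : g x.val < n) :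
    (liftF n g x).val = g x.val := by simp [liftF, h]

def m0f (x : ℕ) : ℕ := if x % 2 = 0 then x + 1 else x - 1

def m1f (n x : ℕ) : ℕ :=
  if x = 0 then n - 1 else if x = n - 1 then 0 else if x % 2 = 1 then x + 1 else x - 1

def mcf (a b x : ℕ) : ℕ :=
  if x = a then b else if x = b then a else
  if a < x ∧ x < b then (if x % 2 = 1 then x + 1 else x - 1)
  else (if x % 2 = 0 then x + 1 else x - 1)

def chordCond (k a b : ℕ) : Prop :=
  a % 2 = 0 ∧ b % 2 = 1 ∧ a < 2*k + 1 ∧ 2*k + 1 ≤ b ∧ b < 4*k + 2 ∧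
    b ≠ a + 1 ∧ ¬(a = 0 ∧ b = 4*k + 1)

lemma m0f_lt {k n : ℕ} (hk : n = 4*k + 2) : ∀ x < n, m0f x < n := by
  subst hk; intro x hx; unfold m0f; split <;> omega

lemma m0f_invol {n : ℕ} : ∀ x < n, m0f (m0f x) = x := by
  intro x hx; unfold m0f; split <;> split <;> omega

lemma m1f_lt {k n : ℕ} (hk : n = 4*k + 2) : ∀ x < n, m1f n x < n := by
  subst hk; intro x hx; unfold m1f; split_ifs <;> omega

set_option maxHeartbeats 1000000 in
lemma m1f_invol {k n : ℕ} (hk : n = 4*k + 2) (hk1 : 1 ≤ k) : ∀ x < n, m1f n (m1f n x) = x := by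
  subst hk; intro x hx; unfold m1f
  split_ifs <;> first | omega | exact (by assumption : False).elim

lemma mcf_lt {k n a b : ℕ} (hk : n = 4*k + 2) (hab : chordCond k a b) :
    ∀ x < n, mcf a b x < n := by
  obtain ⟨h1, h2, h3, h4, h5, h6, h7⟩ := hab
  subst hk; intro x hx; unfold mcf
  split_ifs <;> first | omega | exact (by assumption : False).elim

set_option maxHeartbeats 4000000 in
lemma mcf_invol {k n a b : ℕ} (hk : n = 4*k + 2) (hab : chordCond k a b) :
    ∀ x < n, mcf a b (mcf a b x) = x := by
  obtain ⟨h1, h2, h3, h4, h5, h6, h7⟩ := hab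
  subst hk; intro x hx; unfold mcf
  split_ifs <;> first | omega | exact (by assumption : False).elim

lemma adj_of_cyc {n : ℕ} {S : Finset (ℕ × ℕ)} {x y : Fin n}
    (hne : x.val ≠ y.val) (h : cycAdjN n x.val y.val) : (GG n S).Adj x y :=
  ⟨fun e => hne (congrArg Fin.val e), Or.inl h⟩

lemma m0f_adj {k n : ℕ} {S : Finset (ℕ × ℕ)} (hk : n = 4*k + 2) :
    ∀ v : Fin n, (GG n S).Adj v (liftF n m0f v) := by
  intro v
  have h1 : m0f v.val < n := m0f_lt hk v.val v.isLt
  have hv := v.isLt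
  refine adj_of_cyc ?_ ?_ <;> rw [liftF_val h1] <;> simp only [cycAdjN, m0f] <;>
    subst hk <;> split_ifs <;> omega

lemma m1f_adj {k n : ℕ} {S : Finset (ℕ × ℕ)} (hk : n = 4*k + 2) (hk1 : 1 ≤ k) :
    ∀ v : Fin n, (GG n S).Adj v (liftF n (m1f n) v) := by
  intro v
  have h1 : m1f n v.val < n := m1f_lt hk v.val v.isLt
  have hv := v.isLt
  refine adj_of_cyc ?_ ?_ <;> rw [liftF_val h1] <;> simp only [cycAdjN, m1f] <;>
    subst hk <;> split_ifs <;> omega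

lemma mcf_eq_b {a b : ℕ} (hne : b ≠ a) : mcf a b a = b := by simp [mcf]

lemma mcf_eq_a {a b : ℕ} (hne : b ≠ a) : mcf a b b = a := by simp [mcf, hne]

lemma mcf_adj {k n a b : ℕ} {S : Finset (ℕ × ℕ)} (hk : n = 4*k + 2)
    (hab : chordCond k a b) (hmem : (a, b) ∈ S) :
    ∀ v : Fin n, (GG n S).Adj v (liftF n (mcf a b) v) := by
  intro v
  have h1 : mcf a b v.val < n := mcf_lt hk hab v.val v.isLt
  have hv := v.isLt
  obtain ⟨c1, c2, c3, c4, c5, c6, c7⟩ := hab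
  have hba : b ≠ a := by omega
  have hne : v.val ≠ mcf a b v.val := by
    unfold mcf; split_ifs <;> omega
  have hne2 : v ≠ liftF n (mcf a b) v := by
    intro e
    exact hne (by conv_lhs => rw [e]; rw [liftF_val h1])
  refine ⟨hne2, ?_⟩
  rcases eq_or_ne v.val a with h | h
  · right; left
    rw [liftF_val h1, h, mcf_eq_b hba] at *
    rw [h]; exact hmem
  rcases eq_or_ne v.val b with h' | h'
  · right; right
    rw [liftF_val h1, h', mcf_eq_a hba] at *
    rw [h']; exact hmem
  · left
    rw [liftF_val h1]
    simp only [cycAdjN, mcf]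
    subst hk; split_ifs <;> omega

section partner

variable {n : ℕ} {S : Finset (ℕ × ℕ)}

noncomputable def pf (N : (GG n S).Subgraph) (hN : N.IsPerfectMatching) (v : Fin n) : Fin n :=
  (Subgraph.isPerfectMatching_iff.mp hN v).choose

lemma pf_adj (N : (GG n S).Subgraph) (hN : N.IsPerfectMatching) (v : Fin n) :
    N.Adj v (pf N hN v) :=
  (Subgraph.isPerfectMatching_iff.mp hN v).choose_spec.1

lemma pf_uniq {N : (GG n S).Subgraph} {hN : N.IsPerfectMatching} {v w : Fin n}
    (h : N.Adj v w) : w = pf N hN v :=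
  (Subgraph.isPerfectMatching_iff.mp hN v).choose_spec.2 w h

noncomputable def Pv (N : (GG n S).Subgraph) (hN : N.IsPerfectMatching) (x : ℕ) : ℕ :=
  if h : x < n then (pf N hN ⟨x, h⟩).val else 0

variable {N : (GG n S).Subgraph} {hN : N.IsPerfectMatching}

lemma Pv_lt {x : ℕ} (hx : x < n) : Pv N hN x < n := by
  rw [Pv, dif_pos hx]; exact (pf N hN ⟨x, hx⟩).isLt

lemma Pv_adj {x : ℕ} (hx : x < n) : N.Adj ⟨x, hx⟩ ⟨Pv N hN x, Pv_lt hx⟩ := by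
  have h2 : (⟨Pv N hN x, Pv_lt hx⟩ : Fin n) = pf N hN ⟨x, hx⟩ := by
    apply Fin.ext; simp only [Pv, dif_pos hx]
  rw [h2]; exact pf_adj N hN ⟨x, hx⟩

lemma Pv_uniq {x y : ℕ} (hx : x < n) (hy : y < n) (h : N.Adj ⟨x, hx⟩ ⟨y, hy⟩) :
    Pv N hN x = y := by
  have h2 := pf_uniq (hN := hN) h
  rw [Pv, dif_pos hx, ← h2]

lemma Pv_invol {x : ℕ} (hx : x < n) : Pv N hN (Pv N hN x) = x :=
  Pv_uniq (Pv_lt hx) hx (Pv_adj hx).symm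

lemma Pv_ne {x : ℕ} (hx : x < n) : Pv N hN x ≠ x := by
  intro e
  exact (Pv_adj (N := N) (hN := hN) hx).ne.symm (Fin.ext e)

lemma Pv_opts {x : ℕ} (hx : x < n) :
    cycAdjN n x (Pv N hN x) ∨ (x, Pv N hN x) ∈ S ∨ (Pv N hN x, x) ∈ S :=
  (N.adj_sub (Pv_adj hx)).2

open scoped Classical in
noncomputable def chIn (N : (GG n S).Subgraph) (hN : N.IsPerfectMatching) : Finset (ℕ × ℕ) :=
  S.filter (fun c => Pv N hN c.1 = c.2)

open scoped Classical in
lemma chIn_mem {c : ℕ × ℕ} : c ∈ chIn N hN ↔ c ∈ S ∧ Pv N hN c.1 = c.2 := by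
  simp [chIn]

lemma chord_mem₁ {x : ℕ} (h : (x, Pv N hN x) ∈ S) : (x, Pv N hN x) ∈ chIn N hN :=
  chIn_mem.mpr ⟨h, rfl⟩

lemma chord_mem₂ {x : ℕ} (hx : x < n) (h : (Pv N hN x, x) ∈ S) :
    (Pv N hN x, x) ∈ chIn N hN :=
  chIn_mem.mpr ⟨h, Pv_invol hx⟩

lemma pv_cyc {x : ℕ} (hx0 : 0 < x) (hx1 : x < n - 1)
    (hnc : ∀ c ∈ chIn N hN, c.1 ≠ x ∧ c.2 ≠ x) :
    Pv N hN x = x + 1 ∨ Pv N hN x = x - 1 := by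
  have hx : x < n := by omega
  rcases Pv_opts (N := N) (hN := hN) (S := S) hx with h | h | h
  · unfold cycAdjN at h; omega
  · exact absurd rfl (hnc _ (chord_mem₁ h)).1
  · exact absurd rfl (hnc _ (chord_mem₂ hx h)).2

lemma pv_zero (hn6 : 6 ≤ n)
    (hnc : ∀ c ∈ chIn N hN, c.1 ≠ 0 ∧ c.2 ≠ 0) :
    Pv N hN 0 = 1 ∨ Pv N hN 0 = n - 1 := by
  have hx : (0:ℕ) < n := by omega
  have hne := Pv_ne (N := N) (hN := hN) hx
  rcases Pv_opts (N := N) (hN := hN) (S := S) hx with h | h | h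
  · unfold cycAdjN at h; omega
  · exact absurd rfl (hnc _ (chord_mem₁ h)).1
  · exact absurd rfl (hnc _ (chord_mem₂ hx h)).2

lemma pv_last (hn6 : 6 ≤ n)
    (hnc : ∀ c ∈ chIn N hN, c.1 ≠ n - 1 ∧ c.2 ≠ n - 1) :
    Pv N hN (n - 1) = n - 2 ∨ Pv N hN (n - 1) = 0 := by
  have hx : n - 1 < n := by omega
  have hlt := Pv_lt (N := N) (hN := hN) hx
  rcases Pv_opts (N := N) (hN := hN) (S := S) hx with h | h | h
  · unfold cycAdjN at h; omega
  · exact absurd rfl (hnc _ (chord_mem₁ h)).1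
  · exact absurd rfl (hnc _ (chord_mem₂ hx h)).2

lemma chain (p q : ℕ) (hq : q ≤ n) (hp : p < n) (hstart : Pv N hN p = p + 1)
    (hmid : ∀ x, p < x → x < q → Pv N hN x = x + 1 ∨ Pv N hN x = x - 1) :
    ∀ x, p ≤ x → x < q →
      ((x - p) % 2 = 0 → Pv N hN x = x + 1) ∧ ((x - p) % 2 = 1 → Pv N hN x = x - 1) := by
  intro x
  induction x using Nat.strong_induction_on with
  | _ x IH =>
    intro hpx hxq
    rcases eq_or_lt_of_le hpx with rfl | hlt
    · exact ⟨fun _ => hstart, fun h => by omega⟩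
    · have hx1 : x - 1 < n := by omega
      have hprev := IH (x - 1) (by omega) (by omega) (by omega)
      constructor
      · intro hpar
        rcases hmid x hlt hxq with h | h
        · exact h
        · exfalso
          have h2 : Pv N hN (x - 1) = x := by
            have := Pv_invol (N := N) (hN := hN) (x := x) (by omega)
            rw [h] at this; exact this
          have h3 := hprev.2 (by omega)
          omega
      · intro hpar
        have h2 : Pv N hN (x - 1) = x := by
          have := hprev.1 (by omega); omega
        have := Pv_invol (N := N) (hN := hN) (x := x - 1) hx1
        rw [h2] at this
        exact this

end partner

section analysis

variable {k n : ℕ} {S : Finset (ℕ × ℕ)} {N : (GG n S).Subgraph} {hN : N.IsPerfectMatching}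

lemma N_eq_msub (g : ℕ → ℕ) (hg : ∀ x < n, g x < n) (h : ∀ x < n, Pv N hN x = g x) :
    N = msub (GG n S) (liftF n g) := by
  apply Subgraph.ext
  · exact Set.eq_univ_of_forall hN.2
  · funext x y
    apply propext
    constructor
    · intro hxy
      have e1 : Pv N hN x.val = y.val := Pv_uniq x.isLt y.isLt hxy
      have e2 : Pv N hN y.val = x.val := Pv_uniq y.isLt x.isLt hxy.symm
      refine ⟨?_, ?_, N.adj_sub hxy⟩
      · apply Fin.ext
        rw [liftF_val (hg _ x.isLt), ← h _ x.isLt, e1]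
      · apply Fin.ext
        rw [liftF_val (hg _ y.isLt), ← h _ y.isLt, e2]
    · rintro ⟨h1, h2, h3⟩
      have e1 : Pv N hN x.val = y.val := by
        rw [h _ x.isLt, ← liftF_val (hg _ x.isLt), h1]
      have h4 := Pv_adj (N := N) (hN := hN) x.isLt
      have h5 : (⟨Pv N hN x.val, Pv_lt x.isLt⟩ : Fin n) = y := Fin.ext e1
      rw [h5] at h4
      exact h4

lemma caseA (hk : n = 4*k + 2) (hk1 : 1 ≤ k) (hC : chIn N hN = ∅) :
    N = msub (GG n S) (liftF n m0f) ∨ N = msub (GG n S) (liftF n (m1f n)) := by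
  have hn6 : 6 ≤ n := by omega
  have hnc : ∀ x : ℕ, ∀ c ∈ chIn N hN, c.1 ≠ x ∧ c.2 ≠ x := by
    intro x c hc; rw [hC] at hc; exact absurd hc (Finset.notMem_empty c)
  rcases pv_zero hn6 (hnc 0) with h0 | h0
  · left
    have hch := chain 0 (n-1) (by omega) (by omega) h0
      (fun x hx1 hx2 => pv_cyc (by omega) (by omega) (hnc x))
    apply N_eq_msub m0f (m0f_lt hk)
    intro x hx
    rcases lt_or_ge x (n-1) with hx' | hx'
    · have h2 := hch x (by omega) hx'
      unfold m0f; split_ifs with hpar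
      · exact h2.1 (by omega)
      · exact h2.2 (by omega)
    · have hx'' : x = n - 1 := by omega
      have h2 := hch (n-2) (by omega) (by omega)
      have h3 : Pv N hN (n-2) = n-1 := by
        have := h2.1 (by omega); omega
      have h4 := Pv_invol (N := N) (hN := hN) (x := n-2) (by omega)
      rw [h3] at h4
      subst hx''; unfold m0f; split_ifs with hpar <;> omega
  · right
    have hlast : Pv N hN (n-1) = 0 := by
      have h4 := Pv_invol (N := N) (hN := hN) (x := 0) (by omega)
      rw [h0] at h4; exact h4
    have h1 : Pv N hN 1 = 2 := by
      rcases pv_cyc (N := N) (hN := hN) (x := 1) (by omega) (by omega) (hnc 1) with h | h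
      · exact h
      · exfalso
        have h' : Pv N hN 1 = 0 := by omega
        have h4 := Pv_invol (N := N) (hN := hN) (x := 1) (by omega)
        rw [h'] at h4
        omega
    have hch := chain 1 (n-1) (by omega) (by omega) h1
      (fun x hx1 hx2 => pv_cyc (by omega) (by omega) (hnc x))
    apply N_eq_msub (m1f n) (m1f_lt hk)
    intro x hx
    unfold m1f
    split_ifs with e1 e2 e3
    · rw [e1]; exact h0
    · rw [e2]; exact hlast
    · exact (hch x (by omega) (by omega)).1 (by omega)
    · exact (hch x (by omega) (by omega)).2 (by omega)

end analysis

section caseB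

variable {k n : ℕ} {S : Finset (ℕ × ℕ)} {N : (GG n S).Subgraph} {hN : N.IsPerfectMatching}

lemma caseB (hk : n = 4*k + 2) (hk1 : 1 ≤ k) (hS : ∀ p ∈ S, chordCond k p.1 p.2)
    {c : ℕ × ℕ} (hC : chIn N hN = {c}) :
    N = msub (GG n S) (liftF n (mcf c.1 c.2)) := by
  have hn6 : 6 ≤ n := by omega
  obtain ⟨a, b⟩ := c
  have hcS : (a, b) ∈ S ∧ Pv N hN a = b := chIn_mem.mp (by rw [hC]; exact Finset.mem_singleton_self _)
  have hcond := hS _ hcS.1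
  obtain ⟨c1, c2, c3, c4, c5, c6, c7⟩ := hcond
  have hab3 : a + 3 ≤ b := by omega
  have hnc : ∀ x : ℕ, x ≠ a → x ≠ b → ∀ c' ∈ chIn N hN, c'.1 ≠ x ∧ c'.2 ≠ x := by
    intro x hxa hxb c' hc'
    rw [hC, Finset.mem_singleton] at hc'
    subst hc'
    exact ⟨fun e => hxa e.symm, fun e => hxb e.symm⟩
  have hPa : Pv N hN a = b := hcS.2
  have hPb : Pv N hN b = a := by
    have h4 := Pv_invol (N := N) (hN := hN) (x := a) (by omega)
    rw [hPa] at h4; exact h4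
  -- interior chain
  have hstart1 : Pv N hN (a + 1) = a + 2 := by
    rcases pv_cyc (N := N) (hN := hN) (x := a + 1) (by omega) (by omega)
      (hnc (a + 1) (by omega) (by omega)) with h | h
    · exact h
    · exfalso
      have h' : Pv N hN (a + 1) = a := by omega
      have h4 := Pv_invol (N := N) (hN := hN) (x := a + 1) (by omega)
      rw [h'] at h4
      omega
  have hch1 := chain (a + 1) b (by omega) (by omega) hstart1
    (fun x hx1 hx2 => pv_cyc (by omega) (by omega) (hnc x (by omega) (by omega)))
  -- the interior values
  have hInt : ∀ x, a < x → x < b → Pv N hN x = (if x % 2 = 1 then x + 1 else x - 1) := by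
    intro x hx1 hx2
    have h2 := hch1 x (by omega) (by omega)
    split_ifs with hp
    · exact h2.1 (by omega)
    · exact h2.2 (by omega)
  -- below/above regions
  have hBelow : a ≠ 0 → Pv N hN 0 = 1 → ∀ x, 0 ≤ x → x < a →
      Pv N hN x = (if x % 2 = 0 then x + 1 else x - 1) := by
    intro ha0 h0 x _ hxa
    have hch0 := chain 0 a (by omega) (by omega) h0
      (fun y hy1 hy2 => pv_cyc (by omega) (by omega) (hnc y (by omega) (by omega)))
    have h2 := hch0 x (by omega) (by omega)
    split_ifs with hp
    · exact h2.1 (by omega)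
    · exact h2.2 (by omega)
  by_cases hb : b = n - 1
  · -- no region above b
    have ha0 : a ≠ 0 := fun e => c7 ⟨e, by omega⟩
    have h0 : Pv N hN 0 = 1 := by
      rcases pv_zero (N := N) (hN := hN) hn6 (hnc 0 (fun e => ha0 e.symm) (by omega)) with h | h
      · exact h
      · exfalso
        have h4 := Pv_invol (N := N) (hN := hN) (x := 0) (by omega)
        rw [h] at h4
        rw [hb] at hPb
        omega
    apply N_eq_msub _ (mcf_lt hk ⟨c1, c2, c3, c4, c5, c6, c7⟩)
    intro x hx
    by_cases hxa : x = a
    · subst hxa; rw [mcf_eq_b (by omega)]; exact hPa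
    by_cases hxb : x = b
    · subst hxb; rw [mcf_eq_a (by omega)]; exact hPb
    by_cases hin : a < x ∧ x < b
    · have : mcf a b x = if x % 2 = 1 then x + 1 else x - 1 := by
        simp [mcf, hxa, hxb, hin]
      rw [this]; exact hInt x hin.1 hin.2
    · have hxa' : x < a := by omega
      have : mcf a b x = if x % 2 = 0 then x + 1 else x - 1 := by
        simp [mcf, hxa, hxb, hin]
      rw [this]; exact hBelow ha0 h0 x (by omega) hxa'
  · -- region above b is nonempty
    have hb3 : b ≤ n - 3 := by omega
    have hstartT : Pv N hN (b + 1) = b + 2 := by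
      rcases pv_cyc (N := N) (hN := hN) (x := b + 1) (by omega) (by omega)
        (hnc (b + 1) (by omega) (by omega)) with h | h
      · exact h
      · exfalso
        have h' : Pv N hN (b + 1) = b := by omega
        have h4 := Pv_invol (N := N) (hN := hN) (x := b + 1) (by omega)
        rw [h'] at h4
        omega
    have hchT := chain (b + 1) (n - 1) (by omega) (by omega) hstartT
      (fun x hx1 hx2 => pv_cyc (by omega) (by omega) (hnc x (by omega) (by omega)))
    have hPn2 : Pv N hN (n - 2) = n - 1 := by
      have h2 := (hchT (n - 2) (by omega) (by omega)).1 (by omega)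
      omega
    have hPlast : Pv N hN (n - 1) = n - 2 := by
      have h4 := Pv_invol (N := N) (hN := hN) (x := n - 2) (by omega)
      rw [hPn2] at h4; exact h4
    have hAbove : ∀ x, b < x → x < n → Pv N hN x = (if x % 2 = 0 then x + 1 else x - 1) := by
      intro x hx1 hx2
      rcases lt_or_ge x (n - 1) with hx3 | hx3
      · have h2 := hchT x (by omega) (by omega)
        split_ifs with hp
        · exact h2.1 (by omega)
        · exact h2.2 (by omega)
      · have hx4 : x = n - 1 := by omega
        subst hx4
        split_ifs with hp
        · omega
        · omega
    apply N_eq_msub _ (mcf_lt hk ⟨c1, c2, c3, c4, c5, c6, c7⟩)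
    intro x hx
    by_cases hxa : x = a
    · subst hxa; rw [mcf_eq_b (by omega)]; exact hPa
    by_cases hxb : x = b
    · subst hxb; rw [mcf_eq_a (by omega)]; exact hPb
    by_cases hin : a < x ∧ x < b
    · have : mcf a b x = if x % 2 = 1 then x + 1 else x - 1 := by
        simp [mcf, hxa, hxb, hin]
      rw [this]; exact hInt x hin.1 hin.2
    · have : mcf a b x = if x % 2 = 0 then x + 1 else x - 1 := by
        simp [mcf, hxa, hxb, hin]
      rw [this]
      rcases lt_or_ge x a with hxa' | hxa'
      · by_cases ha0 : a = 0
        · omega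
        · have h0 : Pv N hN 0 = 1 := by
            rcases pv_zero (N := N) (hN := hN) hn6 (hnc 0 (fun e => ha0 e.symm) (by omega)) with h | h
            · exact h
            · exfalso
              have h4 := Pv_invol (N := N) (hN := hN) (x := 0) (by omega)
              rw [h] at h4
              omega
          exact hBelow ha0 h0 x (by omega) hxa'
      · exact hAbove x (by omega) hx

end caseB

section caseC

variable {k n : ℕ} {S : Finset (ℕ × ℕ)} {N : (GG n S).Subgraph} {hN : N.IsPerfectMatching}

lemma caseC (hk : n = 4*k + 2) (hk1 : 1 ≤ k) (hS : ∀ p ∈ S, chordCond k p.1 p.2)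
    {c c' : ℕ × ℕ} (hc : c ∈ chIn N hN) (hc' : c' ∈ chIn N hN) (hne : c ≠ c') : False := by
  have hn6 : 6 ≤ n := by omega
  have hmem : ∀ d ∈ chIn N hN, d ∈ S ∧ Pv N hN d.1 = d.2 := fun d hd => chIn_mem.mp hd
  have hinj : Set.InjOn Prod.fst (chIn N hN : Set (ℕ × ℕ)) := by
    intro d hd d' hd' he
    have h1 := (hmem d (by exact_mod_cast hd)).2
    have h2 := (hmem d' (by exact_mod_cast hd')).2
    have : d.2 = d'.2 := by rw [← h1, ← h2, he]
    exact Prod.ext he this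
  set F := (chIn N hN).image Prod.fst with hF
  have hcardF : 1 < F.card := by
    rw [hF, Finset.card_image_of_injOn hinj]
    exact Finset.one_lt_card.mpr ⟨c, hc, c', hc', hne⟩
  have hFne : F.Nonempty := Finset.card_pos.mp (by omega)
  set a1 := F.min' hFne with ha1
  have ha1F : a1 ∈ F := F.min'_mem hFne
  have hEne : (F.erase a1).Nonempty := by
    apply Finset.card_pos.mp
    have := Finset.card_erase_of_mem ha1F
    omega
  set a2 := (F.erase a1).min' hEne with ha2
  have ha2E : a2 ∈ F.erase a1 := (F.erase a1).min'_mem hEne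
  have ha2F : a2 ∈ F := Finset.mem_of_mem_erase ha2E
  have ha2ne : a2 ≠ a1 := Finset.ne_of_mem_erase ha2E
  have h12 : a1 < a2 := lt_of_le_of_ne (F.min'_le a2 ha2F) (Ne.symm ha2ne)
  have hmin2 : ∀ x ∈ F, x ≠ a1 → a2 ≤ x := by
    intro x hx hxne
    exact (F.erase a1).min'_le x (Finset.mem_erase.mpr ⟨hxne, hx⟩)
  obtain ⟨d1, hd1, hd1f⟩ := Finset.mem_image.mp ha1F
  obtain ⟨d2, hd2, hd2f⟩ := Finset.mem_image.mp ha2F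
  obtain ⟨q1, q2, q3, q4, q5, q6, q7⟩ := hS _ (hmem d1 hd1).1
  obtain ⟨r1, r2, r3, r4, r5, r6, r7⟩ := hS _ (hmem d2 hd2).1
  have hPa1 : Pv N hN a1 = d1.2 := by rw [← hd1f]; exact (hmem d1 hd1).2
  have hPa2 : Pv N hN a2 = d2.2 := by rw [← hd2f]; exact (hmem d2 hd2).2
  -- a1, a2 even, ≤ 2k; d1.2, d2.2 ≥ 2k+1
  have hev1 : a1 % 2 = 0 := by rw [← hd1f]; exact q1
  have hev2 : a2 % 2 = 0 := by rw [← hd2f]; exact r1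
  have hle1 : a1 < 2*k + 1 := by rw [← hd1f]; exact q3
  have hle2 : a2 < 2*k + 1 := by rw [← hd2f]; exact r3
  have hb1 : 2*k + 1 ≤ d1.2 := q4
  have hb2 : 2*k + 1 ≤ d2.2 := r4
  -- no chords at vertices strictly between a1 and a2
  have hnc : ∀ x : ℕ, a1 < x → x < a2 → ∀ d ∈ chIn N hN, d.1 ≠ x ∧ d.2 ≠ x := by
    intro x hx1 hx2 d hd
    obtain ⟨s1, s2, s3, s4, s5, s6, s7⟩ := hS _ (hmem d hd).1
    constructor
    · intro e
      have hdF : d.1 ∈ F := Finset.mem_image_of_mem Prod.fst hd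
      rcases eq_or_ne d.1 a1 with e' | e'
      · omega
      · have := hmin2 d.1 hdF e'
        omega
    · omega
  have hstart : Pv N hN (a1 + 1) = a1 + 2 := by
    rcases pv_cyc (N := N) (hN := hN) (x := a1 + 1) (by omega) (by omega)
      (hnc (a1 + 1) (by omega) (by omega)) with h | h
    · exact h
    · exfalso
      have h' : Pv N hN (a1 + 1) = a1 := by omega
      have h4 := Pv_invol (N := N) (hN := hN) (x := a1 + 1) (by omega)
      rw [h'] at h4
      omega
  have hch := chain (a1 + 1) a2 (by omega) (by omega) hstart
    (fun x hx1 hx2 => pv_cyc (by omega) (by omega) (hnc x (by omega) (by omega)))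
  have hfin : Pv N hN (a2 - 1) = a2 := by
    have h2 := (hch (a2 - 1) (by omega) (by omega)).1 (by omega)
    omega
  have h4 := Pv_invol (N := N) (hN := hN) (x := a2 - 1) (by omega)
  rw [hfin] at h4
  omega

end caseC

section classify

variable {k n : ℕ} {S : Finset (ℕ × ℕ)}

lemma liftF_invol {g : ℕ → ℕ} (hlt : ∀ x < n, g x < n) (hg : ∀ x < n, g (g x) = x) :
    ∀ v : Fin n, liftF n g (liftF n g v) = v := by
  intro v
  apply Fin.ext
  rw [liftF_val (by rw [liftF_val (hlt _ v.isLt)]; exact hlt _ (hlt _ v.isLt)),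
    liftF_val (hlt _ v.isLt)]
  exact hg _ v.isLt

lemma classify (hk : n = 4*k + 2) (hk1 : 1 ≤ k) (hS : ∀ p ∈ S, chordCond k p.1 p.2)
    (N : (GG n S).Subgraph) (hN : N.IsPerfectMatching) :
    N = msub (GG n S) (liftF n m0f) ∨ N = msub (GG n S) (liftF n (m1f n)) ∨
      ∃ p ∈ S, N = msub (GG n S) (liftF n (mcf p.1 p.2)) := by
  by_cases hC : chIn N hN = ∅
  · rcases caseA hk hk1 hC with h | h
    · exact Or.inl h
    · exact Or.inr (Or.inl h)
  · obtain ⟨c, hc⟩ := Finset.nonempty_iff_ne_empty.mpr hC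
    have hsing : chIn N hN = {c} := by
      apply Finset.eq_singleton_iff_unique_mem.mpr
      refine ⟨hc, ?_⟩
      intro c' hc'
      by_contra hne
      exact caseC hk hk1 hS hc hc' (fun e => hne (e.symm ▸ rfl))
    exact Or.inr (Or.inr ⟨c, (chIn_mem.mp hc).1, caseB hk hk1 hS hsing⟩)

lemma PMset_eq (hk : n = 4*k + 2) (hk1 : 1 ≤ k) (hS : ∀ p ∈ S, chordCond k p.1 p.2) :
    {N : (GG n S).Subgraph | N.IsPerfectMatching} =
      insert (msub (GG n S) (liftF n m0f)) (insert (msub (GG n S) (liftF n (m1f n)))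
        ((fun p : ℕ × ℕ => msub (GG n S) (liftF n (mcf p.1 p.2))) '' ↑S)) := by
  ext N
  simp only [Set.mem_setOf_eq, Set.mem_insert_iff, Set.mem_image, Finset.mem_coe]
  constructor
  · intro hN
    rcases classify hk hk1 hS N hN with h | h | ⟨p, hp, h⟩
    · exact Or.inl h
    · exact Or.inr (Or.inl h)
    · exact Or.inr (Or.inr ⟨p, hp, h.symm⟩)
  · rintro (rfl | rfl | ⟨p, hp, rfl⟩)
    · exact msub_isPM (m0f_adj hk) (liftF_invol (m0f_lt hk) m0f_invol)
    · exact msub_isPM (m1f_adj hk hk1) (liftF_invol (m1f_lt hk) (m1f_invol hk hk1))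
    · exact msub_isPM (mcf_adj hk (hS p hp) hp)
        (liftF_invol (mcf_lt hk (hS p hp)) (mcf_invol hk (hS p hp)))

lemma msub_ne_of_val {V : Type*} {G : SimpleGraph V} {f g : V → V}
    (hadj : ∀ v, G.Adj v (f v)) (hinv : ∀ v, f (f v) = v) (v : V) (hne : g v ≠ f v) :
    msub G f ≠ msub G g := fun h => hne (msub_eq_of_partner hadj hinv h v)

lemma count_lemma (hk : n = 4*k + 2) (hk1 : 1 ≤ k) (hS : ∀ p ∈ S, chordCond k p.1 p.2) :
    {N : (GG n S).Subgraph | N.IsPerfectMatching}.ncard = S.card + 2 := by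
  have hn6 : 6 ≤ n := by omega
  rw [PMset_eq hk hk1 hS]
  set f0 := msub (GG n S) (liftF n m0f) with hf0
  set f1 := msub (GG n S) (liftF n (m1f n)) with hf1
  set fc := fun p : ℕ × ℕ => msub (GG n S) (liftF n (mcf p.1 p.2)) with hfc
  -- values of partners at specific vertices
  have hv0 : (0 : ℕ) < n := by omega
  have hval0 : (liftF n m0f ⟨0, hv0⟩).val = 1 := by
    rw [liftF_val (m0f_lt hk _ hv0)]; simp [m0f]
  have hval1 : (liftF n (m1f n) ⟨0, hv0⟩).val = n - 1 := by
    rw [liftF_val (m1f_lt hk _ hv0)]; simp [m1f]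
  -- at chord left endpoint
  have hvalc : ∀ p ∈ S, ∀ (h : p.1 < n), (liftF n (mcf p.1 p.2) ⟨p.1, h⟩).val = p.2 := by
    intro p hp h
    obtain ⟨c1, c2, c3, c4, c5, c6, c7⟩ := hS p hp
    rw [liftF_val (mcf_lt hk (hS p hp) _ h)]
    exact mcf_eq_b (by omega)
  have hne01 : f0 ≠ f1 := by
    apply msub_ne_of_val (m0f_adj hk) (liftF_invol (m0f_lt hk) m0f_invol) ⟨0, hv0⟩
    intro e
    have := congrArg Fin.val e
    rw [hval0, hval1] at this
    omega
  have hne0c : ∀ p ∈ S, f0 ≠ fc p := by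
    intro p hp
    obtain ⟨c1, c2, c3, c4, c5, c6, c7⟩ := hS p hp
    have hp1 : p.1 < n := by omega
    apply msub_ne_of_val (m0f_adj hk) (liftF_invol (m0f_lt hk) m0f_invol) ⟨p.1, hp1⟩
    intro e
    have := congrArg Fin.val e
    rw [hvalc p hp hp1, liftF_val (m0f_lt hk _ hp1)] at this
    simp only [m0f] at this
    split_ifs at this <;> omega
  have hne1c : ∀ p ∈ S, f1 ≠ fc p := by
    intro p hp
    obtain ⟨c1, c2, c3, c4, c5, c6, c7⟩ := hS p hp
    have hp1 : p.1 < n := by omega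
    apply msub_ne_of_val (m1f_adj hk hk1) (liftF_invol (m1f_lt hk) (m1f_invol hk hk1)) ⟨p.1, hp1⟩
    intro e
    have := congrArg Fin.val e
    rw [hvalc p hp hp1, liftF_val (m1f_lt hk _ hp1)] at this
    simp only [m1f] at this
    split_ifs at this <;> omega
  have hinjc : Set.InjOn fc ↑S := by
    intro p hp p' hp' he
    obtain ⟨c1, c2, c3, c4, c5, c6, c7⟩ := hS p (by exact_mod_cast hp)
    obtain ⟨d1, d2, d3, d4, d5, d6, d7⟩ := hS p' (by exact_mod_cast hp')
    by_contra hne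
    have hp1 : p.1 < n := by omega
    have hval' : (liftF n (mcf p'.1 p'.2) ⟨p.1, hp1⟩).val = mcf p'.1 p'.2 p.1 :=
      liftF_val (mcf_lt hk (hS p' (by exact_mod_cast hp')) _ hp1)
    have := msub_eq_of_partner (mcf_adj hk (hS p (by exact_mod_cast hp)) (by exact_mod_cast hp))
      (liftF_invol (mcf_lt hk (hS p (by exact_mod_cast hp))) (mcf_invol hk (hS p (by exact_mod_cast hp))))
      he ⟨p.1, hp1⟩
    have hvv := congrArg Fin.val this
    rw [hvalc p (by exact_mod_cast hp) hp1, hval'] at hvv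
    -- hvv : mcf p'.1 p'.2 p.1 = p.2
    have hne2 : p.1 ≠ p'.1 ∨ p.2 ≠ p'.2 := by
      by_contra hcon
      push_neg at hcon
      exact hne (Prod.ext hcon.1 hcon.2)
    simp only [mcf] at hvv
    split_ifs at hvv <;> omega
  have hfin : (fc '' ↑S).Finite := S.finite_toSet.image _
  have hm1 : f1 ∉ fc '' ↑S := by
    rintro ⟨p, hp, he⟩
    exact hne1c p (by exact_mod_cast hp) he.symm
  have hm0 : f0 ∉ insert f1 (fc '' ↑S) := by
    rintro (he | ⟨p, hp, he⟩)
    · exact hne01 he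
    · exact hne0c p (by exact_mod_cast hp) he.symm
  rw [Set.ncard_insert_of_notMem hm0 (hfin.insert _),
    Set.ncard_insert_of_notMem hm1 hfin,
    Set.ncard_image_of_injOn hinjc, Set.ncard_coe_finset]

end classify

section edges

def nextF {n : ℕ} (i : Fin n) : Fin n :=
  if h : i.val + 1 < n then ⟨i.val + 1, h⟩ else ⟨0, Nat.lt_of_le_of_lt (Nat.zero_le _) i.isLt⟩

lemma nextF_val_lt {n : ℕ} {i : Fin n} (h : i.val + 1 < n) : (nextF i).val = i.val + 1 := by
  simp [nextF, h]

lemma nextF_val_eq {n : ℕ} {i : Fin n} (h : i.val + 1 = n) : (nextF i).val = 0 := by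
  simp [nextF, h]

lemma nextF_spec {n : ℕ} (i : Fin n) :
    (nextF i).val = i.val + 1 ∨ ((nextF i).val = 0 ∧ i.val + 1 = n) := by
  have := i.isLt
  unfold nextF
  split_ifs <;> simp <;> omega

lemma nextF_val {n : ℕ} (i : Fin n) :
    (nextF i).val = if i.val + 1 < n then i.val + 1 else 0 := by
  rcases lt_or_ge (i.val + 1) n with h | h
  · rw [nextF_val_lt h]; simp [h]
  · have h2 : i.val + 1 = n := by have := i.isLt; omega
    rw [nextF_val_eq h2]; simp [h2]

def finClip (n : ℕ) (hn : 0 < n) (x : ℕ) : Fin n := ⟨x % n, Nat.mod_lt _ hn⟩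

def cycE (n : ℕ) : Finset (Sym2 (Fin n)) :=
  Finset.univ.image (fun i : Fin n => s(i, nextF i))

def chordE (n : ℕ) (hn : 0 < n) (S : Finset (ℕ × ℕ)) : Finset (Sym2 (Fin n)) :=
  S.image (fun p => s(finClip n hn p.1, finClip n hn p.2))

variable {k n : ℕ} {S : Finset (ℕ × ℕ)}

lemma adj_next (hk : n = 4*k + 2) (hk1 : 1 ≤ k) (i : Fin n) :
    (GG n S).Adj i (nextF i) := by
  have hi := i.isLt
  have hv := nextF_spec i
  apply adj_of_cyc
  · omega
  · unfold cycAdjN; omega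

lemma edgeSet_eq (hk : n = 4*k + 2) (hk1 : 1 ≤ k) (hS : ∀ p ∈ S, chordCond k p.1 p.2)
    (hn : 0 < n) :
    (GG n S).edgeSet = ↑(cycE n ∪ chordE n hn S) := by
  ext e
  induction e with
  | _ u v =>
    rw [mem_edgeSet]
    simp only [Finset.coe_union, Set.mem_union, Finset.mem_coe, cycE, chordE,
      Finset.mem_image, Finset.mem_univ, true_and]
    constructor
    · rintro ⟨hne, hcyc | hs | hs⟩
      · have hu := u.isLt
        have hv := v.isLt
        have hnu := nextF_spec u
        have hnv := nextF_spec v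
        rcases hcyc with h | h | h | h
        · left; exact ⟨u, by rw [show nextF u = v from Fin.ext (by omega)]⟩
        · left; exact ⟨v, by rw [show nextF v = u from Fin.ext (by omega), Sym2.eq_swap]⟩
        · left; exact ⟨v, by rw [show nextF v = u from Fin.ext (by omega), Sym2.eq_swap]⟩
        · left; exact ⟨u, by rw [show nextF u = v from Fin.ext (by omega)]⟩
      · right
        refine ⟨(u.val, v.val), hs, ?_⟩
        have h1 : finClip n hn u.val = u := Fin.ext (Nat.mod_eq_of_lt u.isLt)
        have h2 : finClip n hn v.val = v := Fin.ext (Nat.mod_eq_of_lt v.isLt)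
        rw [h1, h2]
      · right
        refine ⟨(v.val, u.val), hs, ?_⟩
        have h1 : finClip n hn u.val = u := Fin.ext (Nat.mod_eq_of_lt u.isLt)
        have h2 : finClip n hn v.val = v := Fin.ext (Nat.mod_eq_of_lt v.isLt)
        rw [h1, h2, Sym2.eq_swap]
    · rintro (⟨i, hi⟩ | ⟨p, hp, he⟩)
      · rcases Sym2.eq_iff.mp hi with ⟨rfl, rfl⟩ | ⟨rfl, rfl⟩
        · exact adj_next hk hk1 i
        · exact (adj_next hk hk1 i).symm
      · obtain ⟨c1, c2, c3, c4, c5, c6, c7⟩ := hS p hp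
        have ha : p.1 % n = p.1 := Nat.mod_eq_of_lt (by omega)
        have hb : p.2 % n = p.2 := Nat.mod_eq_of_lt (by omega)
        have hadj : (GG n S).Adj (finClip n hn p.1) (finClip n hn p.2) := by
          refine ⟨?_, Or.inr (Or.inl ?_)⟩
          · intro hcon
            have := congrArg Fin.val hcon
            simp only [finClip, ha, hb] at this
            omega
          · simp only [finClip, ha, hb]
            exact hp
        rcases Sym2.eq_iff.mp he.symm with ⟨rfl, rfl⟩ | ⟨rfl, rfl⟩
        · exact hadj
        · exact hadj.symm

lemma cycE_card (hk : n = 4*k + 2) (hk1 : 1 ≤ k) : (cycE n).card = n := by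
  rw [cycE, Finset.card_image_of_injective _ ?_, Finset.card_univ, Fintype.card_fin]
  intro i j he
  have hi := i.isLt
  have hj := j.isLt
  have hvi := nextF_spec i
  have hvj := nextF_spec j
  rcases Sym2.eq_iff.mp he with ⟨h1, h2⟩ | ⟨h1, h2⟩
  · exact h1
  · apply Fin.ext
    have e1 := congrArg Fin.val h1
    have e2 := congrArg Fin.val h2
    omega

lemma chordE_card (hk : n = 4*k + 2) (hS : ∀ p ∈ S, chordCond k p.1 p.2) (hn : 0 < n) :
    (chordE n hn S).card = S.card := by
  rw [chordE, Finset.card_image_of_injOn]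
  intro p hp p' hp' he
  obtain ⟨c1, c2, c3, c4, c5, c6, c7⟩ := hS p hp
  obtain ⟨d1, d2, d3, d4, d5, d6, d7⟩ := hS p' hp'
  have ha : p.1 % n = p.1 := Nat.mod_eq_of_lt (by omega)
  have hb : p.2 % n = p.2 := Nat.mod_eq_of_lt (by omega)
  have ha' : p'.1 % n = p'.1 := Nat.mod_eq_of_lt (by omega)
  have hb' : p'.2 % n = p'.2 := Nat.mod_eq_of_lt (by omega)
  rcases Sym2.eq_iff.mp he with ⟨h1, h2⟩ | ⟨h1, h2⟩ <;>
    [skip; skip] <;>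
    · have e1 := congrArg Fin.val h1
      have e2 := congrArg Fin.val h2
      simp only [finClip, ha, hb, ha', hb'] at e1 e2
      have : p.1 = p'.1 ∧ p.2 = p'.2 := by omega
      exact Prod.ext this.1 this.2

lemma edge_disjoint (hk : n = 4*k + 2) (hk1 : 1 ≤ k)
    (hS : ∀ p ∈ S, chordCond k p.1 p.2) (hn : 0 < n) :
    Disjoint (cycE n) (chordE n hn S) := by
  rw [Finset.disjoint_left]
  intro e he he'
  simp only [cycE, chordE, Finset.mem_image, Finset.mem_univ, true_and] at he he'
  obtain ⟨i, hi⟩ := he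
  obtain ⟨p, hp, hpe⟩ := he'
  obtain ⟨c1, c2, c3, c4, c5, c6, c7⟩ := hS p hp
  have ha : p.1 % n = p.1 := Nat.mod_eq_of_lt (by omega)
  have hb : p.2 % n = p.2 := Nat.mod_eq_of_lt (by omega)
  have hi2 := i.isLt
  have hv := nextF_spec i
  rw [← hi] at hpe
  rcases Sym2.eq_iff.mp hpe with ⟨h1, h2⟩ | ⟨h1, h2⟩ <;>
    · have e1 := congrArg Fin.val h1
      have e2 := congrArg Fin.val h2
      simp only [finClip, ha, hb] at e1 e2
      omega

lemma edge_count (hk : n = 4*k + 2) (hk1 : 1 ≤ k)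
    (hS : ∀ p ∈ S, chordCond k p.1 p.2) (hn : 0 < n) :
    (GG n S).edgeSet.ncard = n + S.card := by
  rw [edgeSet_eq hk hk1 hS hn, Set.ncard_coe_finset,
    Finset.card_union_of_disjoint (edge_disjoint hk hk1 hS hn),
    cycE_card hk hk1, chordE_card hk hS hn]

end edges

section connect

variable {k n : ℕ} {S : Finset (ℕ × ℕ)}

lemma dir_step (hk : n = 4*k + 2) (hk1 : 1 ≤ k) (v : Fin n) :
    dirAdj (GG n S) (msub (GG n S) (liftF n m0f)) (fun v : Fin n => decide (v.val % 2 = 1))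
      v (nextF v) := by
  have hv := v.isLt
  have hnx := nextF_spec v
  refine ⟨adj_next hk hk1 v, ?_⟩
  rw [Subgraph.mem_edgeSet]
  have hval : (liftF n m0f v).val = m0f v.val := liftF_val (m0f_lt hk _ hv)
  by_cases hpar : v.val % 2 = 0
  · apply iff_of_true
    · refine ⟨?_, ?_, adj_next hk hk1 v⟩
      · apply Fin.ext
        rw [hval]
        unfold m0f
        rw [if_pos hpar]
        omega
      · apply Fin.ext
        have h2 : (nextF v).val = v.val + 1 := by omega
        rw [liftF_val (m0f_lt hk _ (nextF v).isLt), h2]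
        unfold m0f
        rw [if_neg (by omega)]
        omega
    · simp [hpar]
  · apply iff_of_false
    · rintro ⟨h1, -, -⟩
      have := congrArg Fin.val h1
      rw [hval] at this
      unfold m0f at this
      rw [if_neg hpar] at this
      omega
    · simp [hpar]

lemma reach (hk : n = 4*k + 2) (hk1 : 1 ≤ k) (x y : Fin n) :
    Relation.ReflTransGen
      (dirAdj (GG n S) (msub (GG n S) (liftF n m0f)) (fun v : Fin n => decide (v.val % 2 = 1)))
      x y := by
  have hn : 0 < n := by omega
  have key : ∀ (j : ℕ) (x : Fin n), Relation.ReflTransGen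
      (dirAdj (GG n S) (msub (GG n S) (liftF n m0f)) (fun v : Fin n => decide (v.val % 2 = 1)))
      x (finClip n hn (x.val + j)) := by
    intro j
    induction j with
    | zero =>
      intro x
      have he : finClip n hn (x.val + 0) = x := Fin.ext (by simp [finClip, Nat.mod_eq_of_lt x.isLt])
      rw [he]
    | succ j IH =>
      intro x
      have hstep := dir_step (S := S) hk hk1 (finClip n hn (x.val + j))
      have heq : nextF (finClip n hn (x.val + j)) = finClip n hn (x.val + (j + 1)) := by
        apply Fin.ext
        have hnx := nextF_spec (finClip n hn (x.val + j))
        have hc : (finClip n hn (x.val + j)).val = (x.val + j) % n := rfl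
        have hc2 : (finClip n hn (x.val + (j+1))).val = (x.val + (j+1)) % n := rfl
        have e1 : (x.val + (j + 1)) % n = ((x.val + j) % n + 1) % n := by
          rw [show x.val + (j+1) = (x.val + j) + 1 by omega]
          exact (Nat.mod_add_mod _ _ _).symm
        rw [hc2, e1]
        have hlt : (x.val + j) % n < n := Nat.mod_lt _ hn
        have hisLt := (nextF (finClip n hn (x.val + j))).isLt
        rcases hnx with h | ⟨h1, h2⟩
        · rw [hc] at h
          have hlt2 : (x.val + j) % n + 1 < n := by omega
          rw [Nat.mod_eq_of_lt hlt2]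
          omega
        · rw [hc] at h2
          rw [show (x.val + j) % n + 1 = n by omega, Nat.mod_self]
          omega
      rw [heq] at hstep
      exact (IH x).tail hstep
  have hj : (x.val + (n - x.val + y.val)) % n = y.val := by
    have he : x.val + (n - x.val + y.val) = n + y.val := by have := x.isLt; omega
    rw [he, Nat.add_mod_left, Nat.mod_eq_of_lt y.isLt]
  have hfin : finClip n hn (x.val + (n - x.val + y.val)) = y := Fin.ext hj
  have := key (n - x.val + y.val) x
  rw [hfin] at this
  exact this

end connect

section chordall

def chordAll (k : ℕ) : Finset (ℕ × ℕ) :=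
  ((((Finset.range (k+1)).image (fun i => 2*i)) ×ˢ
    ((Finset.range (k+1)).image (fun i => 2*k+1+2*i))).erase (0, 4*k+1)).erase (2*k, 2*k+1)

lemma chordAll_cond {k : ℕ} (hk1 : 1 ≤ k) : ∀ p ∈ chordAll k, chordCond k p.1 p.2 := by
  intro p hp
  rw [chordAll, Finset.mem_erase, Finset.mem_erase, Finset.mem_product] at hp
  obtain ⟨hne1, hne2, hA, hB⟩ := hp
  rw [Finset.mem_image] at hA hB
  obtain ⟨i, hi, hiv⟩ := hA
  obtain ⟨j, hj, hjv⟩ := hB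
  rw [Finset.mem_range] at hi hj
  have h1 : ¬(p.1 = 2*k ∧ p.2 = 2*k+1) := fun ⟨e1, e2⟩ => hne1 (Prod.ext e1 e2)
  have h2 : ¬(p.1 = 0 ∧ p.2 = 4*k+1) := fun ⟨e1, e2⟩ => hne2 (Prod.ext e1 e2)
  refine ⟨by omega, by omega, by omega, by omega, by omega, by omega, by omega⟩

lemma chordAll_card {k : ℕ} (hk1 : 1 ≤ k) : (chordAll k).card = k*k + 2*k - 1 := by
  have hA : ((Finset.range (k+1)).image (fun i => 2*i)).card = k + 1 := by
    rw [Finset.card_image_of_injective _ (fun a b h => by omega), Finset.card_range]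
  have hB : ((Finset.range (k+1)).image (fun i => 2*k+1+2*i)).card = k + 1 := by
    rw [Finset.card_image_of_injective _ (fun a b h => by omega), Finset.card_range]
  have hmemA : ∀ x, x ≤ k → 2*x ∈ (Finset.range (k+1)).image (fun i => 2*i) :=
    fun x hx => Finset.mem_image.mpr ⟨x, Finset.mem_range.mpr (by omega), rfl⟩
  have hmemB : ∀ x, x ≤ k → 2*k+1+2*x ∈ (Finset.range (k+1)).image (fun i => 2*k+1+2*i) :=
    fun x hx => Finset.mem_image.mpr ⟨x, Finset.mem_range.mpr (by omega), rfl⟩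
  have hm1 : ((0 : ℕ), 4*k+1) ∈ (((Finset.range (k+1)).image (fun i => 2*i)) ×ˢ
      ((Finset.range (k+1)).image (fun i => 2*k+1+2*i))) := by
    rw [Finset.mem_product]
    exact ⟨by simpa using hmemA 0 (by omega), by
      have := hmemB k (le_refl k); simpa [show 2*k+1+2*k = 4*k+1 by omega] using this⟩
  have hm2 : ((2*k : ℕ), 2*k+1) ∈ ((((Finset.range (k+1)).image (fun i => 2*i)) ×ˢ
      ((Finset.range (k+1)).image (fun i => 2*k+1+2*i))).erase (0, 4*k+1)) := by
    rw [Finset.mem_erase]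
    constructor
    · intro e
      have e1 := congrArg Prod.fst e
      simp at e1
      omega
    · rw [Finset.mem_product]
      exact ⟨hmemA k (le_refl k), by
        have := hmemB 0 (by omega); simpa using this⟩
  rw [chordAll, Finset.card_erase_of_mem hm2, Finset.card_erase_of_mem hm1,
    Finset.card_product, hA, hB]
  have : (k+1)*(k+1) = k*k + 2*k + 1 := by ring
  omega

end chordall

theorem main_aux (k n m : ℕ) (hk : n = 4*k + 2) (hk1 : 1 ≤ k) (hnm : n ≤ m)
    (hmu : m ≤ k*k + 6*k + 1) :
    ∃ (G : SimpleGraph (Fin n)) (col : Fin n → Bool) (M : G.Subgraph),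
      (∀ x y, G.Adj x y → col x ≠ col y) ∧
      M.IsPerfectMatching ∧
      (∀ x y : Fin n, Relation.ReflTransGen (dirAdj G M col) x y) ∧
      G.edgeSet.ncard = m ∧
      {N : G.Subgraph | N.IsPerfectMatching}.ncard = m - n + 2 := by
  have hc := chordAll_card hk1
  obtain ⟨S, hSsub, hScard⟩ := Finset.exists_subset_card_eq
    (show m - n ≤ (chordAll k).card by rw [hc]; omega)
  have hS : ∀ p ∈ S, chordCond k p.1 p.2 := fun p hp => chordAll_cond hk1 p (hSsub hp)
  refine ⟨GG n S, fun v => decide (v.val % 2 = 1), msub (GG n S) (liftF n m0f),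
    ?_, ?_, ?_, ?_, ?_⟩
  · rintro x y ⟨hne, hcyc | hs | hs⟩
    · have hx := x.isLt
      have hpar : x.val % 2 ≠ y.val % 2 := by
        unfold cycAdjN at hcyc; omega
      simp only [ne_eq, decide_eq_decide]
      omega
    · obtain ⟨c1, c2, c3, c4, c5, c6, c7⟩ := hS _ hs
      simp only [ne_eq, decide_eq_decide]
      omega
    · obtain ⟨c1, c2, c3, c4, c5, c6, c7⟩ := hS _ hs
      simp only [ne_eq, decide_eq_decide]
      omega
  · exact msub_isPM (m0f_adj hk) (liftF_invol (m0f_lt hk) m0f_invol)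
  · exact fun x y => reach hk hk1 x y
  · rw [edge_count hk hk1 hS (by omega), hScard]
    omega
  · rw [count_lemma hk hk1 hS, hScard]

end SCG

/-- For every `n` with `4 ∣ n + 2` and every `m` with
`n ≤ m ≤ n²/16 + 5n/4 − 7/4`, there exists a strongly connected bipartite graph with
`n` vertices and `m` edges having exactly `m − n + 2` perfect matchings. -/
theorem exists_strongly_connected_graph_min_matchings (n m : ℕ)
    (hn : 4 ∣ n + 2) (hnm : n ≤ m)
    (hm : (m : ℚ) ≤ (n : ℚ) ^ 2 / 16 + 5 * (n : ℚ) / 4 - 7 / 4) :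
    ∃ (G : SimpleGraph (Fin n)) (col : Fin n → Bool) (M : G.Subgraph),
      (∀ x y, G.Adj x y → col x ≠ col y) ∧
      M.IsPerfectMatching ∧
      (∀ x y : Fin n, Relation.ReflTransGen (dirAdj G M col) x y) ∧
      G.edgeSet.ncard = m ∧
      {N : G.Subgraph | N.IsPerfectMatching}.ncard = m - n + 2 := by
  obtain ⟨kk, hkk⟩ := hn
  have hkk1 : 1 ≤ kk := by omega
  by_cases hk0 : kk = 1
  · have hn2 : n = 2 := by omega
    exfalso
    have h1 : (m : ℚ) ≤ 1 := by
      rw [hn2] at hm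
      push_cast at hm
      linarith
    have h2 : m ≤ 1 := by exact_mod_cast h1
    omega
  · set k := kk - 1 with hkdef
    have hk : n = 4*k + 2 := by omega
    have hk1 : 1 ≤ k := by omega
    have hmu : m ≤ k*k + 6*k + 1 := by
      have hcast : (n : ℚ) = 4*(k:ℚ) + 2 := by
        rw [hk]; push_cast; ring
      rw [hcast] at hm
      have expand : ((4*(k:ℚ)+2)^2/16 + 5*(4*(k:ℚ)+2)/4 - 7/4) = (k:ℚ)*k + 6*k + 1 := by
        ring
      rw [expand] at hm
      have h1 : (m:ℚ) ≤ ((k*k + 6*k + 1 : ℕ) : ℚ) := by push_cast; linarith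
      exact_mod_cast h1
    exact SCG.main_aux k n m hk hk1 hnm hmu
end

section
/- Let G be a trimmed strongly connected bipartite graph (every vertex has degree ≥ 3) with an M^+-minimal edge π. Then no non-isolated edge of G lies in every perfect matching of G − π. -/
open SimpleGraph

open scoped symmDiff

section Aux

variable {V : Type*}

/-- A reflexive-transitive closure walk in a subrelation of adjacency gives a walk in the
graph all of whose darts follow the relation. -/
lemma reflTransGen_toWalk {G : SimpleGraph V} {r : V → V → Prop}
    (hr : ∀ x y, r x y → G.Adj x y) {u v : V} (h : Relation.ReflTransGen r u v) :
    ∃ w : G.Walk u v, ∀ d ∈ w.darts, r d.fst d.snd := by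
  induction h with
  | refl => exact ⟨.nil, by simp⟩
  | tail hab hbc ih =>
    obtain ⟨w, hw⟩ := ih
    refine ⟨w.concat (hr _ _ hbc), ?_⟩
    intro d hd
    rw [SimpleGraph.Walk.darts_concat, List.concat_eq_append] at hd
    rcases List.mem_append.mp hd with h1 | h2
    · exact hw d h1
    · have : d = SimpleGraph.Dart.mk (_, _) (hr _ _ hbc) := by simpa using h2
      subst this
      exact hbc

/-- From the strong connectivity of the orientation `D(G, M)`, every edge of `G` lies in
some perfect matching of `G`. -/
lemma exists_pm_with_edge (G : SimpleGraph V)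
    (col : V → Bool) (hcol : ∀ x y, G.Adj x y → col x ≠ col y)
    (M : G.Subgraph) (hM : M.IsPerfectMatching)
    (hsc : ∀ x y : V, Relation.ReflTransGen (dirAdj G M col) x y)
    (π : Sym2 V) (hπ : π ∈ G.edgeSet) :
    ∃ N : G.Subgraph, N.IsPerfectMatching ∧ π ∈ N.edgeSet := by
  classical
  by_cases hπM : π ∈ M.edgeSet
  · exact ⟨M, hM, hπM⟩
  -- choose an orientation of π compatible with `dirAdj`
  obtain ⟨a, b, hab, hColA, hπeq⟩ : ∃ a b, G.Adj a b ∧ col a = true ∧ π = s(a, b) := by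
    clear hπM
    revert hπ
    induction π using Sym2.ind with
    | _ u v =>
      intro hπ
      have hadj : G.Adj u v := hπ
      cases h : col u with
      | true => exact ⟨u, v, hadj, h, rfl⟩
      | false =>
        have hv : col v = true := by
          have := hcol u v hadj; cases hcv : col v <;> simp_all
        exact ⟨v, u, hadj.symm, hv, Sym2.eq_swap.symm⟩
  subst hπeq
  have hColB : col b = false := by
    have := hcol a b hab; cases hcb : col b <;> simp_all
  -- the directed walk from b back to a
  obtain ⟨w0, hw0⟩ := reflTransGen_toWalk (fun x y (h : dirAdj G M col x y) => h.1) (hsc b a)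
  set p := w0.bypass with hp_def
  have hp : p.IsPath := w0.bypass_isPath
  have hpd : ∀ d ∈ p.darts, dirAdj G M col d.fst d.snd :=
    fun d hd => hw0 d (w0.darts_bypass_subset hd)
  have hnotmem : s(a, b) ∉ p.edges := by
    intro hmem
    obtain ⟨d, hd, hde⟩ := List.mem_map.mp hmem
    rcases dart_edge_eq_mk'_iff'.mp hde with ⟨h1, h2⟩ | ⟨h1, h2⟩
    · -- dart (a, b) : then b appears in p.support.tail, but p starts at b
      have hb : b ∈ p.darts.map (·.snd) := List.mem_map.mpr ⟨d, hd, h2⟩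
      rw [SimpleGraph.Walk.map_snd_darts] at hb
      have := hp.support_nodup
      rw [p.support_eq_cons, List.nodup_cons] at this
      exact this.1 hb
    · -- dart (b, a) : then dirAdj b a forces s(a,b) ∈ M, contradiction
      have hdir := hpd d hd
      rw [h1, h2] at hdir
      have : s(b, a) ∈ M.edgeSet := hdir.2.mpr hColB
      rw [Sym2.eq_swap] at this
      exact hπM this
  -- the cycle
  set c : G.Walk a a := SimpleGraph.Walk.cons hab p with hc_def
  have hcyc : c.IsCycle := (SimpleGraph.Walk.cons_isCycle_iff p hab).mpr ⟨hp, hnotmem⟩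
  have hLdir : ∀ d ∈ c.darts, dirAdj G M col d.fst d.snd := by
    intro d hd
    rw [hc_def, SimpleGraph.Walk.darts_cons] at hd
    rcases List.mem_cons.mp hd with rfl | hd'
    · exact ⟨hab, by simp [hπM, hColA]⟩
    · exact hpd d hd'
  -- list facts about the darts of the cycle
  have hps : p.support = p.support.dropLast ++ [a] := by
    conv_lhs => rw [← List.dropLast_append_getLast (p.support_ne_nil)]
    rw [SimpleGraph.Walk.getLast_support]
  have hfst_list : c.darts.map (·.fst) = a :: p.support.dropLast := by
    rw [SimpleGraph.Walk.map_fst_darts, hc_def, SimpleGraph.Walk.support_cons]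
    conv_lhs => rw [hps]
    rw [← List.cons_append, List.dropLast_concat]
  have hsnd_list : c.darts.map (·.snd) = p.support := by
    rw [SimpleGraph.Walk.map_snd_darts, hc_def, SimpleGraph.Walk.support_cons, List.tail_cons]
  have hsupp_nodup := hp.support_nodup
  have hdl_nodup : (a :: p.support.dropLast).Nodup := by
    rw [hps] at hsupp_nodup
    rw [List.nodup_cons]
    constructor
    · intro ha
      rw [List.nodup_append'] at hsupp_nodup
      exact hsupp_nodup.2.2 ha (by simp)
    · exact (List.nodup_append'.mp hsupp_nodup).1
  have hfst : (c.darts.map (·.fst)).Nodup := by rw [hfst_list]; exact hdl_nodup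
  have hsnd : (c.darts.map (·.snd)).Nodup := by rw [hsnd_list]; exact hp.support_nodup
  have hfst_inj : ∀ d1 ∈ c.darts, ∀ d2 ∈ c.darts, d1.fst = d2.fst → d1 = d2 :=
    List.inj_on_of_nodup_map hfst
  have hsnd_inj : ∀ d1 ∈ c.darts, ∀ d2 ∈ c.darts, d1.snd = d2.snd → d1 = d2 :=
    List.inj_on_of_nodup_map hsnd
  have hmemfs : ∀ v : V, (∃ d ∈ c.darts, d.fst = v) ↔ (∃ d ∈ c.darts, d.snd = v) := by
    intro v
    have h1 : v ∈ c.darts.map (·.fst) ↔ v ∈ c.darts.map (·.snd) := by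
      rw [hfst_list, hsnd_list]
      conv_rhs => rw [hps]
      rw [List.mem_cons, List.mem_append, List.mem_singleton, or_comm]
    simpa [List.mem_map] using h1
  have hedges_nodup : c.edges.Nodup := hcyc.edges_nodup
  have hedges_nodup' : (c.darts.map SimpleGraph.Dart.edge).Nodup := hedges_nodup
  have hedge_inj : ∀ d1 ∈ c.darts, ∀ d2 ∈ c.darts, d1.edge = d2.edge → d1 = d2 :=
    List.inj_on_of_nodup_map hedges_nodup'
  have hno2 : ∀ d1 ∈ c.darts, ∀ d2 ∈ c.darts, d1.fst = d2.snd → d1.snd = d2.fst → False := by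
    intro d1 h1 d2 h2 hfs hsf
    have hee : d1.edge = d2.edge := by
      have e1 : d1.edge = s(d1.fst, d1.snd) := rfl
      have e2 : d2.edge = s(d2.fst, d2.snd) := rfl
      rw [e1, e2, hfs, hsf, Sym2.eq_swap]
    have hd12 := hedge_inj d1 h1 d2 h2 hee
    subst hd12
    exact d1.adj.ne hfs
  -- the underlying cycle as a SimpleGraph
  set C : SimpleGraph V := c.toSubgraph.spanningCoe with hC_def
  have hCadj : ∀ u v, C.Adj u v ↔
      (∃ d ∈ c.darts, d.fst = u ∧ d.snd = v) ∨ (∃ d ∈ c.darts, d.fst = v ∧ d.snd = u) := by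
    intro u v
    have h1 : C.Adj u v ↔ s(u, v) ∈ c.edges := by
      rw [hC_def]
      change c.toSubgraph.Adj u v ↔ _
      rw [← SimpleGraph.Subgraph.mem_edgeSet, SimpleGraph.Walk.mem_edges_toSubgraph]
    rw [h1]
    constructor
    · intro hmem
      obtain ⟨d, hd, hde⟩ := List.mem_map.mp hmem
      rcases dart_edge_eq_mk'_iff'.mp hde with ⟨e1, e2⟩ | ⟨e1, e2⟩
      · exact Or.inl ⟨d, hd, e1, e2⟩
      · exact Or.inr ⟨d, hd, e1, e2⟩
    · rintro (⟨d, hd, e1, e2⟩ | ⟨d, hd, e1, e2⟩)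
      · exact List.mem_map.mpr ⟨d, hd, dart_edge_eq_mk'_iff'.mpr (Or.inl ⟨e1, e2⟩)⟩
      · exact List.mem_map.mpr ⟨d, hd, dart_edge_eq_mk'_iff'.mpr (Or.inr ⟨e1, e2⟩)⟩
  have hCG : C ≤ G := SimpleGraph.Subgraph.spanningCoe_le _
  have hM_adj_iff : ∀ d ∈ c.darts, (M.Adj d.fst d.snd ↔ col d.fst = false) := by
    intro d hd
    have := (hLdir d hd).2
    rwa [SimpleGraph.Subgraph.mem_edgeSet] at this
  -- C consists of cycles
  have hCcyc : C.IsCycles := by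
    intro v hv
    obtain ⟨w, hw⟩ := hv
    have hw' : C.Adj v w := hw
    have hvd : (∃ d ∈ c.darts, d.fst = v) ∧ (∃ d ∈ c.darts, d.snd = v) := by
      rcases (hCadj v w).mp hw' with ⟨d, hd, e1, e2⟩ | ⟨d, hd, e1, e2⟩
      · exact ⟨⟨d, hd, e1⟩, (hmemfs v).mp ⟨d, hd, e1⟩⟩
      · exact ⟨(hmemfs v).mpr ⟨d, hd, e2⟩, ⟨d, hd, e2⟩⟩
    obtain ⟨⟨d1, hd1, hf1⟩, ⟨d2, hd2, hs2⟩⟩ := hvd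
    have hne' : d1.snd ≠ d2.fst := fun h => hno2 d1 hd1 d2 hd2 (hf1.trans hs2.symm) h
    have hset : C.neighborSet v = {d1.snd, d2.fst} := by
      ext u
      simp only [SimpleGraph.mem_neighborSet, Set.mem_insert_iff, Set.mem_singleton_iff]
      constructor
      · intro hu
        rcases (hCadj v u).mp hu with ⟨d', hd', e1, e2⟩ | ⟨d', hd', e1, e2⟩
        · left
          have : d' = d1 := hfst_inj d' hd' d1 hd1 (e1.trans hf1.symm)
          rw [← e2, this]
        · right
          have : d' = d2 := hsnd_inj d' hd' d2 hd2 (e2.trans hs2.symm)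
          rw [← e1, this]
      · rintro (rfl | rfl)
        · exact (hCadj v d1.snd).mpr (Or.inl ⟨d1, hd1, hf1, rfl⟩)
        · exact (hCadj v d2.fst).mpr (Or.inr ⟨d2, hd2, rfl, hs2⟩)
    rw [hset, Set.ncard_pair hne']
  -- C alternates with respect to M
  have hAlt : C.IsAlternating M.spanningCoe := by
    intro v w w' hww' hvw hvw'
    have key : ∀ u u' : V, u ≠ u' →
        (∃ d ∈ c.darts, d.fst = v ∧ d.snd = u) →
        (∃ d ∈ c.darts, d.fst = u' ∧ d.snd = v) →
        (M.spanningCoe.Adj v u ↔ ¬ M.spanningCoe.Adj v u') := by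
      rintro u u' huu' ⟨d1, hd1, f1, s1⟩ ⟨d2, hd2, f2, s2⟩
      have h1 : M.Adj v u ↔ col v = false := by
        have := hM_adj_iff d1 hd1; rwa [f1, s1] at this
      have h2 : M.Adj u' v ↔ col u' = false := by
        have := hM_adj_iff d2 hd2; rwa [f2, s2] at this
      have hadj2 : G.Adj u' v := by
        have := (hLdir d2 hd2).1; rwa [f2, s2] at this
      have hcc : col u' ≠ col v := hcol u' v hadj2
      have h2' : M.Adj v u' ↔ col u' = false := by
        rw [SimpleGraph.Subgraph.adj_comm]; exact h2
      simp only [SimpleGraph.Subgraph.spanningCoe_adj]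
      rw [h1, h2']
      cases hcv : col v <;> cases hcu : col u' <;> rw [hcv, hcu] at hcc <;>
        first
          | exact absurd rfl hcc
          | decide
    rcases (hCadj v w).mp hvw with ⟨d1, hd1, f1, s1⟩ | ⟨d1, hd1, f1, s1⟩ <;>
      rcases (hCadj v w').mp hvw' with ⟨d2, hd2, f2, s2⟩ | ⟨d2, hd2, f2, s2⟩
    · exact absurd (by
        have : d1 = d2 := hfst_inj d1 hd1 d2 hd2 (f1.trans f2.symm)
        rw [← s1, ← s2, this]) hww'
    · exact key w w' hww' ⟨d1, hd1, f1, s1⟩ ⟨d2, hd2, f2, s2⟩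
    · have := key w' w hww'.symm ⟨d2, hd2, f2, s2⟩ ⟨d1, hd1, f1, s1⟩
      tauto
    · exact absurd (by
        have : d1 = d2 := hsnd_inj d1 hd1 d2 hd2 (s1.trans s2.symm)
        rw [← f1, ← f2, this]) hww'
  -- build the new perfect matching
  have hPM' := SimpleGraph.Subgraph.IsPerfectMatching.symmDiff_of_isAlternating hM hAlt hCcyc
  have hle : M.spanningCoe ∆ C ≤ G := by
    intro u v h
    simp only [symmDiff_def, SimpleGraph.sup_adj, SimpleGraph.sdiff_adj,
      SimpleGraph.Subgraph.spanningCoe_adj] at h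
    rcases h with ⟨h, -⟩ | ⟨h, -⟩
    · exact M.adj_sub h
    · exact hCG h
  refine ⟨(SimpleGraph.toSubgraph (M.spanningCoe ∆ C) (le_refl _)).map
      (SimpleGraph.Hom.ofLE hle), ⟨hPM'.1.map_ofLE hle, ?_⟩, ?_⟩
  · intro v
    simp only [SimpleGraph.Subgraph.map_verts, SimpleGraph.Hom.coe_ofLE, id_eq, Set.image_id']
    exact hPM'.2 v
  · rw [SimpleGraph.Subgraph.mem_edgeSet]
    have hCab : C.Adj a b := by
      refine (hCadj a b).mpr (Or.inl ⟨SimpleGraph.Dart.mk (a, b) hab, ?_, rfl, rfl⟩)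
      rw [hc_def, SimpleGraph.Walk.darts_cons]
      exact List.mem_cons_self
    have hsd : (M.spanningCoe ∆ C).Adj a b := by
      simp only [symmDiff_def, SimpleGraph.sup_adj, SimpleGraph.sdiff_adj,
        SimpleGraph.Subgraph.spanningCoe_adj]
      right
      exact ⟨hCab, fun h => hπM (SimpleGraph.Subgraph.mem_edgeSet.mpr h)⟩
    exact ⟨a, b, by simpa using hsd, rfl, rfl⟩

end Aux

/-- Let `G` be a trimmed strongly connected bipartite graph (every vertex has degree
at least 3) with an `M⁺`-minimal edge `π`.  Then no non-isolated edge of `G` lies in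
every perfect matching of `G − π`. -/
theorem Mplus_minimal_no_forced_nonisolated_edge
    {V : Type*} [Fintype V] (G : SimpleGraph V) [DecidableRel G.Adj]
    (col : V → Bool) (hcol : ∀ x y, G.Adj x y → col x ≠ col y)
    (M : G.Subgraph) (hM : M.IsPerfectMatching)
    (hsc : ∀ x y : V, Relation.ReflTransGen (dirAdj G M col) x y)
    (hdeg : ∀ v : V, 3 ≤ G.degree v)
    (π : Sym2 V) (hπ : π ∈ G.edgeSet)
    (hmin : ¬ ∃ e ∈ G.edgeSet,
      {N : G.Subgraph | N.IsPerfectMatching ∧ e ∈ N.edgeSet} ⊂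
        {N : G.Subgraph | N.IsPerfectMatching ∧ π ∈ N.edgeSet})
    (e : Sym2 V) (he : e ∈ G.edgeSet) (hne : e ≠ π)
    (hniso : ∃ x y z : V, e = s(x, y) ∧ G.Adj x z ∧ z ≠ y) :
    ¬ (∀ N : (G.deleteEdges {π}).Subgraph, N.IsPerfectMatching → e ∈ N.edgeSet) := by
  classical
  intro H
  obtain ⟨x, y, z, hexy, hxz, hzy⟩ := hniso
  have hadjxy : G.Adj x y := by rw [hexy] at he; exact he
  -- Claim A: every perfect matching of G avoiding π contains e
  have claimA : ∀ N : G.Subgraph, N.IsPerfectMatching → π ∉ N.edgeSet → N.Adj x y := by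
    intro N hN hπN
    set N' : (G.deleteEdges {π}).Subgraph :=
      { verts := N.verts
        Adj := N.Adj
        adj_sub := by
          intro a b h
          rw [SimpleGraph.deleteEdges_adj]
          refine ⟨N.adj_sub h, ?_⟩
          simp only [Set.mem_singleton_iff]
          intro hab
          exact hπN (hab ▸ (SimpleGraph.Subgraph.mem_edgeSet.mpr h))
        edge_vert := fun h => N.edge_vert h
        symm := N.symm } with hN'def
    have hN' : N'.IsPerfectMatching := ⟨fun v hv => hN.1 hv, fun v => hN.2 v⟩
    have := H N' hN'
    rw [hexy, SimpleGraph.Subgraph.mem_edgeSet] at this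
    exact this
  -- choose two neighbors of x distinct from y
  have hycard : y ∈ G.neighborFinset x := by
    rw [SimpleGraph.mem_neighborFinset]; exact hadjxy
  have hcard : 2 ≤ ((G.neighborFinset x).erase y).card := by
    have h1 := hdeg x
    rw [← SimpleGraph.card_neighborFinset_eq_degree] at h1
    have := Finset.card_erase_of_mem hycard
    omega
  have hcard' : 1 < ((G.neighborFinset x).erase y).card := by omega
  obtain ⟨w1, hw1, w2, hw2, hww⟩ := Finset.one_lt_card.mp hcard'
  have hw1' : w1 ≠ y ∧ G.Adj x w1 := by
    rw [Finset.mem_erase, SimpleGraph.mem_neighborFinset] at hw1; exact hw1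
  have hw2' : w2 ≠ y ∧ G.Adj x w2 := by
    rw [Finset.mem_erase, SimpleGraph.mem_neighborFinset] at hw2; exact hw2
  -- Claim B: every PM containing an edge at x other than e contains π
  have claimB : ∀ w' : V, w' ≠ y → G.Adj x w' →
      {N : G.Subgraph | N.IsPerfectMatching ∧ s(x, w') ∈ N.edgeSet} ⊆
      {N : G.Subgraph | N.IsPerfectMatching ∧ π ∈ N.edgeSet} := by
    rintro w' hw'y hadj' N ⟨hN, hNe⟩
    refine ⟨hN, ?_⟩
    by_contra hπN
    have hNxy := claimA N hN hπN
    obtain ⟨u, hu, hu_uniq⟩ := hN.1 (hN.2 x)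
    have h1 := hu_uniq y hNxy
    have h2 := hu_uniq w' (SimpleGraph.Subgraph.mem_edgeSet.mp hNe)
    exact hw'y (h2.trans h1.symm)
  -- with minimality, equality
  have claimEq : ∀ w' : V, w' ≠ y → G.Adj x w' →
      {N : G.Subgraph | N.IsPerfectMatching ∧ s(x, w') ∈ N.edgeSet} =
      {N : G.Subgraph | N.IsPerfectMatching ∧ π ∈ N.edgeSet} := by
    intro w' h1 h2
    by_contra hne'
    exact hmin ⟨s(x, w'), (SimpleGraph.mem_edgeSet G).mpr h2,
      HasSubset.Subset.ssubset_of_ne (claimB w' h1 h2) hne'⟩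
  -- a perfect matching containing π
  obtain ⟨N0, hN0, hπN0⟩ := exists_pm_with_edge G col hcol M hM hsc π hπ
  have hmem : N0 ∈ {N : G.Subgraph | N.IsPerfectMatching ∧ π ∈ N.edgeSet} := ⟨hN0, hπN0⟩
  have hf1 : N0.Adj x w1 := by
    have h := claimEq w1 hw1'.1 hw1'.2
    have : N0 ∈ {N : G.Subgraph | N.IsPerfectMatching ∧ s(x, w1) ∈ N.edgeSet} := by
      rw [h]; exact hmem
    exact SimpleGraph.Subgraph.mem_edgeSet.mp this.2
  have hf2 : N0.Adj x w2 := by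
    have h := claimEq w2 hw2'.1 hw2'.2
    have : N0 ∈ {N : G.Subgraph | N.IsPerfectMatching ∧ s(x, w2) ∈ N.edgeSet} := by
      rw [h]; exact hmem
    exact SimpleGraph.Subgraph.mem_edgeSet.mp this.2
  obtain ⟨u, hu, hu_uniq⟩ := hN0.1 (hN0.2 x)
  exact hww ((hu_uniq w1 hf1).trans (hu_uniq w2 hf2).symm)
end
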